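/- arXiv:1507.00778 — 16 statements merged into one kernel-verified Lean document; each statement's English description precedes it below -/
import Mathlib

section
/- Let μ be a probability mass function on ℕ with finite first moment ‖μ‖₁ = Σ_{n≥0} n·μ(n) < ∞, and let (g^k_{α,β}) be a family of mass-migration rates satisfying condition (C1). Then for every α, β ∈ ℕ the three quantities Σ_{γ≥0} |A(α,γ)|·μ(γ), Σ_{γ≥0} |A(γ,β)|·μ(γ), and Σ_{α≥0} Σ_{γ≥0} |A(α,γ)|·μ(γ)·μ(α) are finite. Moreover, if ψ : ℕ → ℝ is a function such that A(α,β) = ψ(β) − ψ(α) whenever μ(α)·μ(β) ≠ 0, then Σ_{β≥0} |ψ(β)|·μ(β) < ∞. -/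
/-!
Off the null set of `μ α * μ β`, `A α β * μ α * μ β` is a gain term (mass `k` arriving from
`(α + k, β - k)`) minus the loss term `(∑ k, g k α β) * μ α * μ β`. By (C1) the losses are bounded
by `C (α + β) μ α μ β`, which is summable thanks to the first moment; the gains are the same
triple sum `∑ g k n m * μ n * μ m` reindexed by `(α, k, m) ↦ (α + k, m, k)`, so they are
summable too. This bounds the double sum; the single sums are its slices, and
`ψ β = A α₀ β + ψ α₀` for any `α₀` with `μ α₀ ≠ 0`.
-/

open Finset

theorem Summable.sum_antidiagonal_snd {ι A α : Type*} [AddCommMonoid A] [HasAntidiagonal A]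
    [AddCommMonoid α] [TopologicalSpace α] [ContinuousAdd α] [RegularSpace α]
    {f : ι × (A × A) → α} (h : Summable f) :
    Summable fun x : ι × A => ∑ p ∈ antidiagonal x.2, f (x.1, p) := by
  let e : (Σ x : ι × A, antidiagonal x.2) ≃ ι × (A × A) :=
    { toFun := fun x => (x.1.1, x.2.1)
      invFun := fun y => ⟨(y.1, y.2.1 + y.2.2), y.2, mem_antidiagonal.2 rfl⟩
      left_inv := by
        rintro ⟨⟨i, n⟩, p, hp⟩
        obtain rfl := mem_antidiagonal.1 hp
        rfl
      right_inv := fun _ => rfl }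
  refine ((e.summable_iff.2 h).sigma' fun _ => (hasSum_fintype _).summable).congr fun x => ?_
  rw [tsum_fintype (L := .unconditional _)]
  exact sum_finset_coe (fun p => f (x.1, p)) _

theorem summable_of_summable_mul_weight {ι κ : Type*} {w : ι → ℝ} {a : ι → κ → ℝ}
    (ha : ∀ i j, w i = 0 → a i j = 0) (h : Summable fun q : ι × κ => a q.1 q.2 * w q.1)
    (i : ι) : Summable (a i) := by
  by_cases hw : w i = 0
  · rw [show a i = 0 from funext fun j => ha i j hw]
    exact summable_zero
  · exact (summable_mul_right_iff hw).1 (h.prod_factor i)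

theorem summable_abs_mul_of_eq_sub_const {ι : Type*} {μ ψ a : ι → ℝ} (hμ : ∀ i, 0 ≤ μ i)
    (hμs : Summable μ) (c : ℝ) (ha : Summable fun i => |a i| * μ i)
    (h : ∀ i, μ i ≠ 0 → a i = ψ i - c) : Summable fun i => |ψ i| * μ i := by
  refine (ha.add (hμs.mul_left |c|)).of_nonneg_of_le (fun i => mul_nonneg (abs_nonneg _) (hμ i))
    fun i => ?_
  by_cases hi : μ i = 0
  · simp [hi]
  · have : ψ i = a i + c := by rw [h i hi]; ring
    rw [this, ← add_mul]
    exact mul_le_mul_of_nonneg_right (abs_add_le _ _) (hμ i)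

namespace MassMigration

variable (μ : ℕ → ℝ) (g : ℕ → ℕ → ℕ → ℝ)

def gain (α β : ℕ) : ℝ :=
  ∑ k ∈ Icc 1 β, g k (α + k) (β - k) * (μ (α + k) * μ (β - k))

def loss (α β : ℕ) : ℝ :=
  (∑ k ∈ Icc 1 α, g k α β) * (μ α * μ β)

/-- The quantity `A` of the paper. -/
noncomputable def generator (α β : ℕ) : ℝ :=
  if μ α * μ β ≠ 0 then
    (∑ k ∈ Icc 1 β, g k (α + k) (β - k) * (μ (α + k) * μ (β - k)) / (μ α * μ β))
      - ∑ k ∈ Icc 1 α, g k α β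
  else 0

/-- A family of mass-migration rates satisfying (C1) with constant `C`. -/
structure IsRates (g : ℕ → ℕ → ℕ → ℝ) (C : ℝ) : Prop where
  nonneg : ∀ k α β, 0 ≤ g k α β
  zero_left : ∀ α β, g 0 α β = 0
  eq_zero_of_lt : ∀ k α β, α < k ∨ α = 0 → g k α β = 0
  const_pos : 0 < C
  sum_mul_le : ∀ α β : ℕ, 0 < α → ∑ k ∈ Icc 1 α, (k : ℝ) * g k α β ≤ C * ((α : ℝ) + (β : ℝ))

variable {μ g}

theorem gain_nonneg (hμ : ∀ n, 0 ≤ μ n) (hg : ∀ k α β, 0 ≤ g k α β) (α β : ℕ) :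
    0 ≤ gain μ g α β :=
  sum_nonneg fun _ _ => mul_nonneg (hg _ _ _) (mul_nonneg (hμ _) (hμ _))

theorem loss_nonneg (hμ : ∀ n, 0 ≤ μ n) (hg : ∀ k α β, 0 ≤ g k α β) (α β : ℕ) :
    0 ≤ loss μ g α β :=
  mul_nonneg (sum_nonneg fun _ _ => hg _ _ _) (mul_nonneg (hμ _) (hμ _))

theorem abs_generator_mul_le (hμ : ∀ n, 0 ≤ μ n) (hg : ∀ k α β, 0 ≤ g k α β) (α β : ℕ) :
    |generator μ g α β| * μ β * μ α ≤ gain μ g α β + loss μ g α β := by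
  by_cases h : μ α * μ β = 0
  · simp only [generator, h, ne_eq, not_true_eq_false, if_false, abs_zero, zero_mul]
    exact add_nonneg (gain_nonneg hμ hg α β) (loss_nonneg hμ hg α β)
  · have hpos : 0 < μ α * μ β := (mul_nonneg (hμ α) (hμ β)).lt_of_ne' h
    have hgen : generator μ g α β * (μ α * μ β) = gain μ g α β - loss μ g α β := by
      rw [generator, if_pos h, gain, loss, sub_mul, ← sum_div, div_mul_cancel₀ _ h]
    calc |generator μ g α β| * μ β * μ α = |gain μ g α β - loss μ g α β| := by
          rw [← hgen, abs_mul, abs_of_pos hpos]; ring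
      _ ≤ gain μ g α β + loss μ g α β := by
          rw [abs_sub_le_iff]
          constructor <;> linarith [gain_nonneg hμ hg α β, loss_nonneg hμ hg α β]

theorem generator_eq_zero {α β : ℕ} (h : μ α * μ β = 0) : generator μ g α β = 0 := by
  simp [generator, h]

namespace IsRates

variable {C : ℝ}

theorem eq_zero_of_notMem (hg : IsRates g C) {k α β : ℕ} (hk : k ∉ Icc 1 α) : g k α β = 0 := by
  rcases Nat.eq_zero_or_pos k with rfl | hk0
  · exact hg.zero_left α β
  · refine hg.eq_zero_of_lt k α β (Or.inl ?_)
    simp only [mem_Icc, not_and, not_le] at hk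
    exact hk hk0

theorem sum_le (hg : IsRates g C) (α β : ℕ) : ∑ k ∈ Icc 1 α, g k α β ≤ C * ((α : ℝ) + (β : ℝ)) := by
  rcases Nat.eq_zero_or_pos α with rfl | hα
  · simpa using mul_nonneg hg.const_pos.le (Nat.cast_nonneg β)
  · refine le_trans (sum_le_sum fun k hk => ?_) (hg.sum_mul_le α β hα)
    exact le_mul_of_one_le_left (hg.nonneg k α β) (mod_cast (mem_Icc.1 hk).1)

end IsRates

variable {C : ℝ}

theorem loss_le (hμ : ∀ n, 0 ≤ μ n) (hg : IsRates g C) (α β : ℕ) :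
    loss μ g α β ≤ C * ((α : ℝ) + (β : ℝ)) * (μ α * μ β) :=
  mul_le_mul_of_nonneg_right (hg.sum_le α β) (mul_nonneg (hμ α) (hμ β))

theorem summable_loss (hμ : ∀ n, 0 ≤ μ n) (hμs : Summable μ)
    (hμmom : Summable fun n : ℕ => (n : ℝ) * μ n) (hg : IsRates g C) :
    Summable fun q : ℕ × ℕ => loss μ g q.1 q.2 := by
  have hmom (n : ℕ) : 0 ≤ (n : ℝ) * μ n := mul_nonneg n.cast_nonneg (hμ n)
  have hbound : Summable fun q : ℕ × ℕ => C * ((q.1 : ℝ) + (q.2 : ℝ)) * (μ q.1 * μ q.2) :=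
    (((hμmom.mul_of_nonneg hμs hmom hμ).add (hμs.mul_of_nonneg hμmom hμ hmom)).mul_left C).congr
      fun q => by ring
  exact hbound.of_nonneg_of_le (fun q => loss_nonneg hμ hg.nonneg q.1 q.2)
    fun q => loss_le hμ hg q.1 q.2

theorem hasSum_rate_mul (hg : IsRates g C) (α β : ℕ) :
    HasSum (fun k => g k α β * (μ α * μ β)) (loss μ g α β) := by
  rw [loss, sum_mul]
  exact hasSum_sum_of_ne_finset_zero fun k hk => by simp [hg.eq_zero_of_notMem hk]

theorem summable_rate_mul (hμ : ∀ n, 0 ≤ μ n) (hμs : Summable μ)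
    (hμmom : Summable fun n : ℕ => (n : ℝ) * μ n) (hg : IsRates g C) :
    Summable fun x : (ℕ × ℕ) × ℕ => g x.2 x.1.1 x.1.2 * (μ x.1.1 * μ x.1.2) :=
  (summable_prod_of_nonneg fun _ => mul_nonneg (hg.nonneg _ _ _) (mul_nonneg (hμ _) (hμ _))).2
    ⟨fun q => (hasSum_rate_mul hg q.1 q.2).summable,
      (summable_loss hμ hμs hμmom hg).congr fun q => (hasSum_rate_mul hg q.1 q.2).tsum_eq.symm⟩

theorem gain_eq_sum_antidiagonal (hg0 : ∀ α β, g 0 α β = 0) (α β : ℕ) :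
    gain μ g α β = ∑ p ∈ antidiagonal β, g p.1 (α + p.1) p.2 * (μ (α + p.1) * μ p.2) := by
  rw [Nat.sum_antidiagonal_eq_sum_range_succ fun k m => g k (α + k) m * (μ (α + k) * μ m), gain]
  refine sum_subset (fun k hk => ?_) fun k _ hk => ?_
  · simp only [mem_Icc, mem_range] at hk ⊢
    omega
  · obtain rfl : k = 0 := by
      simp only [mem_Icc, mem_range, not_and, not_le] at *
      omega
    simp [hg0]

theorem summable_gain (hμ : ∀ n, 0 ≤ μ n) (hμs : Summable μ)
    (hμmom : Summable fun n : ℕ => (n : ℝ) * μ n) (hg : IsRates g C) :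
    Summable fun q : ℕ × ℕ => gain μ g q.1 q.2 := by
  have hinj : Function.Injective fun x : ℕ × (ℕ × ℕ) => ((x.1 + x.2.1, x.2.2), x.2.1) := by
    rintro ⟨α, k, m⟩ ⟨α', k', m'⟩ h
    simp only [Prod.mk.injEq] at h ⊢
    omega
  exact (((summable_rate_mul hμ hμs hμmom hg).comp_injective hinj).sum_antidiagonal_snd).congr
    fun q => (gain_eq_sum_antidiagonal hg.zero_left q.1 q.2).symm

theorem summable_abs_generator_mul (hμ : ∀ n, 0 ≤ μ n) (hμs : Summable μ)
    (hμmom : Summable fun n : ℕ => (n : ℝ) * μ n) (hg : IsRates g C) :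
    Summable fun q : ℕ × ℕ => |generator μ g q.1 q.2| * μ q.2 * μ q.1 :=
  ((summable_gain hμ hμs hμmom hg).add (summable_loss hμ hμs hμmom hg)).of_nonneg_of_le
    (fun _ => mul_nonneg (mul_nonneg (abs_nonneg _) (hμ _)) (hμ _))
    fun q => abs_generator_mul_le hμ hg.nonneg q.1 q.2

end MassMigration

/-- integrability of the quantities `A` and `ψ`.
`μ` is a probability mass function on `ℕ` with finite first moment, and `g` is a
family of mass-migration rates satisfying condition (C1).  `A` is the quantity
defined from `g` and `μ` in the paper.  Then the three displayed quantities are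
summable, and any `ψ` with `A α β = ψ β - ψ α` (whenever `μ α * μ β ≠ 0`)
satisfies `Σ_β |ψ β| μ β < ∞`. -/
theorem stmt0
    (μ : ℕ → ℝ) (hμnn : ∀ n : ℕ, 0 ≤ μ n) (hμ1 : HasSum μ 1)
    (hμmom : Summable (fun n : ℕ => (n : ℝ) * μ n))
    (g : ℕ → ℕ → ℕ → ℝ)
    (hgnn : ∀ k α β, 0 ≤ g k α β)
    (hg0 : ∀ α β, g 0 α β = 0)
    (hgz : ∀ k α β, α < k ∨ α = 0 → g k α β = 0)
    (C : ℝ) (hC : 0 < C)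
    (hC1 : ∀ α β : ℕ, 0 < α →
      ∑ k ∈ Finset.Icc 1 α, (k : ℝ) * g k α β ≤ C * ((α : ℝ) + (β : ℝ)))
    (A : ℕ → ℕ → ℝ)
    (hA : ∀ α β, A α β =
      if μ α * μ β ≠ 0 then
        (∑ k ∈ Finset.Icc 1 β,
            g k (α + k) (β - k) * (μ (α + k) * μ (β - k)) / (μ α * μ β))
          - ∑ k ∈ Finset.Icc 1 α, g k α β
      else 0) :
    (∀ α β : ℕ,
      Summable (fun γ => |A α γ| * μ γ) ∧
      Summable (fun γ => |A γ β| * μ γ)) ∧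
    Summable (fun q : ℕ × ℕ => |A q.1 q.2| * μ q.2 * μ q.1) ∧
    (∀ ψ : ℕ → ℝ,
      (∀ α β, μ α * μ β ≠ 0 → A α β = ψ β - ψ α) →
      Summable (fun β => |ψ β| * μ β)) := by
  obtain rfl : A = MassMigration.generator μ g := funext fun α => funext (hA α)
  have hμs : Summable μ := hμ1.summable
  have hsum :=
    MassMigration.summable_abs_generator_mul hμnn hμs hμmom ⟨hgnn, hg0, hgz, hC, hC1⟩
  have hvanish (α γ : ℕ) (h : μ α = 0) : |MassMigration.generator μ g α γ| * μ γ = 0 ∧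
      |MassMigration.generator μ g γ α| * μ γ = 0 := by
    simp [MassMigration.generator_eq_zero, h]
  have hrow := summable_of_summable_mul_weight (fun α γ h => (hvanish α γ h).1) hsum
  have hcol := summable_of_summable_mul_weight (fun β γ h => (hvanish β γ h).2)
    (hsum.prod_symm.congr fun _ => by simp only [Prod.fst_swap, Prod.snd_swap]; ring)
  refine ⟨fun α β => ⟨hrow α, hcol β⟩, hsum, fun ψ hψ => ?_⟩
  obtain ⟨α₀, hα₀⟩ : ∃ α₀, μ α₀ ≠ 0 := by
    by_contra! h
    obtain rfl : μ = 0 := funext h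
    exact one_ne_zero (hμ1.unique hasSum_zero)
  exact summable_abs_mul_of_eq_sub_const hμnn hμs (ψ α₀) (hrow α₀)
    fun β hβ => hψ α₀ β (mul_ne_zero hα₀ hβ)
end

section
/- Let μ : ℕ → (0,∞) and let g¹ : ℕ × ℕ → [0,∞) with g¹_{0,β} = 0 for all β. Suppose the pairwise balance conditions hold: (i) for all α ≥ 1 and β ≥ 1, g¹_{α+1,β−1}·μ(α+1)·μ(β−1) − g¹_{β,α}·μ(α)·μ(β) = g¹_{α,β}·μ(α)·μ(β) − g¹_{β+1,α−1}·μ(α−1)·μ(β+1); and (ii) for all β ≥ 1, g¹_{1,β−1}·μ(1)·μ(β−1) = g¹_{β,0}·μ(0)·μ(β). Then the detailed balance condition holds: for all α, β ≥ 0, g¹_{α+1,β}·μ(α+1)·μ(β) = g¹_{β+1,α}·μ(β+1)·μ(α). -/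
/-- pairwise balance implies detailed balance for misanthropes
processes.  `g α β` is the rate at which one particle jumps from a site with
`α` particles to a site with `β` particles, and `μ n > 0` is the single-site
marginal weight of a candidate product invariant measure. -/
theorem stmt1
    (μ : ℕ → ℝ) (hμ : ∀ n : ℕ, 0 < μ n)
    (g : ℕ → ℕ → ℝ) (hgnn : ∀ α β : ℕ, 0 ≤ g α β) (hg0 : ∀ β : ℕ, g 0 β = 0)
    (hi : ∀ α β : ℕ, 1 ≤ α → 1 ≤ β →
      g (α + 1) (β - 1) * μ (α + 1) * μ (β - 1) - g β α * μ α * μ β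
        = g α β * μ α * μ β - g (β + 1) (α - 1) * μ (α - 1) * μ (β + 1))
    (hii : ∀ β : ℕ, 1 ≤ β →
      g 1 (β - 1) * μ 1 * μ (β - 1) = g β 0 * μ 0 * μ β) :
    ∀ α β : ℕ, g (α + 1) β * μ (α + 1) * μ β = g (β + 1) α * μ (β + 1) * μ α := by
  intro α
  induction α with
  | zero =>
    intro β
    have h := hii (β + 1) (by omega)
    simp only [Nat.add_sub_cancel] at h
    linarith [h]
  | succ α ih =>
    intro β
    have h1 := hi (α + 1) (β + 1) (by omega) (by omega)
    simp only [Nat.add_sub_cancel] at h1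
    have h2 := ih (β + 1)
    nlinarith [h1, h2]
end

section
/- Let g¹ : ℕ × ℕ → [0,∞) with g¹_{0,β} = 0 for all β, and assume g¹_{1,α} > 0 and g¹_{α+1,0} > 0 for every α ≥ 0. Suppose the compatibility condition holds: g¹_{α+1,β} = (g¹_{α+1,0}/g¹_{1,α})·(g¹_{1,β}/g¹_{β+1,0})·g¹_{β+1,α} for all α, β ≥ 0. Fix constants μ₀ > 0 and c > 0 and define μ : ℕ → (0,∞) by μ(0) = μ₀ and μ(α) = μ₀·∏_{k=1}^{α} [c·g¹_{1,k−1}/g¹_{k,0}] for α ≥ 1. Then the detailed balance condition holds: for all α, β ≥ 0, g¹_{α+1,β}·μ(α+1)·μ(β) = g¹_{β+1,α}·μ(β+1)·μ(α). -/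
/-- the compatibility condition on the rates of a misanthropes
process yields detailed balance for the explicitly constructed marginal `μ`. -/
theorem stmt2
    (g : ℕ → ℕ → ℝ) (hgnn : ∀ α β : ℕ, 0 ≤ g α β) (hg0 : ∀ β : ℕ, g 0 β = 0)
    (hg1pos : ∀ α : ℕ, 0 < g 1 α) (hga0pos : ∀ α : ℕ, 0 < g (α + 1) 0)
    (hcompat : ∀ α β : ℕ,
      g (α + 1) β = (g (α + 1) 0 / g 1 α) * (g 1 β / g (β + 1) 0) * g (β + 1) α)
    (μ₀ c : ℝ) (hμ₀ : 0 < μ₀) (hc : 0 < c)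
    (μ : ℕ → ℝ) (hμ0 : μ 0 = μ₀)
    (hμ : ∀ α : ℕ, 1 ≤ α →
      μ α = μ₀ * ∏ k ∈ Finset.Icc 1 α, (c * g 1 (k - 1) / g k 0)) :
    ∀ α β : ℕ, g (α + 1) β * μ (α + 1) * μ β = g (β + 1) α * μ (β + 1) * μ α := by
  have hstep : ∀ α : ℕ, μ (α + 1) = μ α * (c * g 1 α / g (α + 1) 0) := by
    intro α
    cases α with
    | zero =>
      rw [hμ 1 le_rfl, hμ0]
      simp
    | succ n =>
      rw [hμ (n + 2) (by omega), hμ (n + 1) (by omega),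
        Finset.prod_Icc_succ_top (by omega : 1 ≤ n + 2)]
      norm_num
      ring
  intro α β
  rw [hstep α, hstep β, hcompat α β]
  have h1 := (hg1pos α).ne'
  have h2 := (hga0pos α).ne'
  have h3 := (hga0pos β).ne'
  field_simp
end

section
/- Let μ : ℕ → [0,∞) with μ(0) > 0, and let g^k_α ≥ 0 be given for integers 1 ≤ k ≤ α (with g^k_α = 0 when k > α or k = 0). The following are equivalent: (i) for all α ≥ 0 and β ≥ 0, Σ_{k=1}^{β} μ(β−k)·g^k_{α+k}·μ(α+k) = μ(α)·Σ_{k=1}^{β} g^k_{β}·μ(β); (ii) for all k ≥ 1 and α ≥ 1, g^k_{α+k}·μ(α+k)·μ(0) = μ(α)·μ(k)·g^k_{k}. -/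
/-- characterization of product invariant measures for
mass-migration zero-range processes.  `g k α` is the rate at which `k`
particles leave a site occupied by `α` particles, and `μ` is the single-site
marginal weight of a candidate product invariant measure.  The invariance
equation (i) is equivalent to the factorized form (ii) of the rates. -/
theorem stmt3
    (μ : ℕ → ℝ) (hμnn : ∀ n : ℕ, 0 ≤ μ n) (hμ0 : 0 < μ 0)
    (g : ℕ → ℕ → ℝ) (hgnn : ∀ k α : ℕ, 0 ≤ g k α)
    (hgz : ∀ k α : ℕ, (α < k ∨ k = 0) → g k α = 0) :
    (∀ α β : ℕ,
        ∑ k ∈ Finset.Icc 1 β, μ (β - k) * (g k (α + k) * μ (α + k))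
          = μ α * ∑ k ∈ Finset.Icc 1 β, g k β * μ β)
      ↔ (∀ k α : ℕ, 1 ≤ k → 1 ≤ α →
          g k (α + k) * μ (α + k) * μ 0 = μ α * μ k * g k k) := by
  have hμ0' : μ 0 ≠ 0 := ne_of_gt hμ0
  constructor
  · intro h
    have key : ∀ k : ℕ, 1 ≤ k → ∀ α : ℕ,
        g k (α + k) * μ (α + k) * μ 0 = μ α * μ k * g k k := by
      intro k
      induction k using Nat.strong_induction_on with
      | _ k IH =>
        intro hk α
        rcases Nat.exists_eq_succ_of_ne_zero (by omega : k ≠ 0) with ⟨m, rfl⟩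
        have hsplit : ∀ γ : ℕ,
            ∑ j ∈ Finset.Icc 1 (m + 1), μ (m + 1 - j) * (g j (γ + j) * μ (γ + j))
              = (∑ j ∈ Finset.Icc 1 m, μ (m + 1 - j) * (g j (γ + j) * μ (γ + j)))
                + μ 0 * (g (m + 1) (γ + (m + 1)) * μ (γ + (m + 1))) := by
          intro γ
          rw [Finset.sum_Icc_succ_top (by omega : 1 ≤ m + 1)]
          simp [Nat.sub_self]
        have e : μ 0 * (∑ j ∈ Finset.Icc 1 (m + 1),
              μ (m + 1 - j) * (g j (α + j) * μ (α + j)))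
            = μ α * (∑ j ∈ Finset.Icc 1 (m + 1),
              μ (m + 1 - j) * (g j (0 + j) * μ (0 + j))) := by
          rw [h α (m + 1), h 0 (m + 1)]
          ring
        rw [hsplit α, hsplit 0] at e
        have hS : μ 0 * ∑ j ∈ Finset.Icc 1 m, μ (m + 1 - j) * (g j (α + j) * μ (α + j))
            = μ α * ∑ j ∈ Finset.Icc 1 m, μ (m + 1 - j) * (g j (0 + j) * μ (0 + j)) := by
          rw [Finset.mul_sum, Finset.mul_sum]
          apply Finset.sum_congr rfl
          intro j hj
          simp only [Finset.mem_Icc] at hj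
          have hIH := IH j (by omega) hj.1 α
          simp only [zero_add]
          linear_combination μ (m + 1 - j) * hIH
        simp only [zero_add] at e hS
        have hG : (g (m + 1) (α + (m + 1)) * μ (α + (m + 1)) * μ 0) * μ 0
            = (μ α * μ (m + 1) * g (m + 1) (m + 1)) * μ 0 := by
          linear_combination e - hS
        exact mul_right_cancel₀ hμ0' hG
    intro k α hk _
    exact key k hk α
  · intro h α β
    have ext : ∀ k : ℕ, 1 ≤ k → ∀ γ : ℕ,
        g k (γ + k) * μ (γ + k) * μ 0 = μ γ * μ k * g k k := by
      intro k hk γ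
      rcases Nat.eq_zero_or_pos γ with rfl | hγ
      · simp only [zero_add]
        ring
      · exact h k γ hk hγ
    rw [Finset.mul_sum]
    apply Finset.sum_congr rfl
    intro k hk
    simp only [Finset.mem_Icc] at hk
    have h1 := ext k hk.1 α
    have h2 := ext k hk.1 (β - k)
    rw [Nat.sub_add_cancel hk.2] at h2
    apply mul_right_cancel₀ hμ0'
    linear_combination μ (β - k) * h1 - μ α * h2
end

section
/- Let μ : ℕ → (0,∞), and let g^k_α ≥ 0 be given for integers 1 ≤ k ≤ α (with g^k_α = 0 when k > α or k = 0), and assume g¹_α > 0 for every α ≥ 1. Then the condition [for all k ≥ 1 and α ≥ 1: g^k_{α+k}·μ(α+k)·μ(0) = μ(α)·μ(k)·g^k_k] holds if and only if both: (a) μ(α)/μ(0) = (1/(g¹_α)!)·(μ(1)·g¹_1/μ(0))^α for all α ≥ 1, and (b) g^k_α·(g¹_{α−k})!·(g¹_k)! = (g¹_α)!·g^k_k for all 1 ≤ k ≤ α. -/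
/-!
The balance condition with `k = 1` is a first-order recurrence
`g¹_{n+1} μ(n+1) = c μ(n)` with `c = μ(1) g¹_1 / μ(0)`, whose solution is
`μ(n) = μ(0) cⁿ / (g¹_n)!`; this is (a). Substituting this closed form into the
balance condition for general `k`, the factors `μ(0)² c^{α+k}` cancel and what is
left is exactly (b) at `α + k`.
-/

/-- The "factorial" `(g¹_k)! = g¹_k · g¹_{k-1} ⋯ g¹_1`, with `(g¹_0)! = 1`. -/
def gfact (g1 : ℕ → ℝ) : ℕ → ℝ
  | 0 => 1
  | k + 1 => g1 (k + 1) * gfact g1 k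

theorem div_eq_one_div_mul_pow_iff {x y f c : ℝ} (n : ℕ) (hy : y ≠ 0) (hf : f ≠ 0) :
    x / y = 1 / f * c ^ n ↔ x * f = y * c ^ n := by
  rw [div_eq_iff hy, one_div_mul_eq_div, div_mul_eq_mul_div, eq_div_iff hf, mul_comm (c ^ n)]

section gfact

variable {g1 : ℕ → ℝ}

theorem gfact_zero : gfact g1 0 = 1 := rfl

theorem gfact_succ (n : ℕ) : gfact g1 (n + 1) = g1 (n + 1) * gfact g1 n := rfl

theorem gfact_ne_zero (h : ∀ n, 1 ≤ n → g1 n ≠ 0) (n : ℕ) : gfact g1 n ≠ 0 := by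
  induction n with
  | zero => exact one_ne_zero
  | succ n ih => exact mul_ne_zero (h (n + 1) (by omega)) ih

theorem mul_gfact_eq_of_recurrence {μ : ℕ → ℝ} {c : ℝ}
    (hrec : ∀ n, g1 (n + 1) * μ (n + 1) = c * μ n) (n : ℕ) :
    μ n * gfact g1 n = μ 0 * c ^ n := by
  induction n with
  | zero => rw [gfact_zero, mul_one, pow_zero, mul_one]
  | succ n ih =>
    calc μ (n + 1) * gfact g1 (n + 1) = (g1 (n + 1) * μ (n + 1)) * gfact g1 n := by
          rw [gfact_succ]; ring
      _ = c * (μ n * gfact g1 n) := by rw [hrec]; ring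
      _ = μ 0 * c ^ (n + 1) := by rw [ih]; ring

theorem recurrence_of_balance {μ : ℕ → ℝ} (hμ0 : μ 0 ≠ 0)
    (hbal : ∀ n, 1 ≤ n → g1 (n + 1) * μ (n + 1) * μ 0 = μ n * μ 1 * g1 1) (n : ℕ) :
    g1 (n + 1) * μ (n + 1) = μ 1 * g1 1 / μ 0 * μ n := by
  rw [div_mul_eq_mul_div, eq_div_iff hμ0]
  rcases Nat.eq_zero_or_pos n with rfl | hn
  · ring
  · linear_combination hbal n hn

theorem forall_div_eq_iff_forall_mul_gfact {μ : ℕ → ℝ} {c : ℝ} (hμ0 : μ 0 ≠ 0)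
    (hF : ∀ n, gfact g1 n ≠ 0) :
    (∀ α, 1 ≤ α → μ α / μ 0 = 1 / gfact g1 α * c ^ α) ↔
      ∀ n, μ n * gfact g1 n = μ 0 * c ^ n := by
  refine ⟨fun h n => ?_, fun h α _ => (div_eq_one_div_mul_pow_iff α hμ0 (hF α)).2 (h α)⟩
  rcases Nat.eq_zero_or_pos n with rfl | hn
  · rw [gfact_zero, pow_zero]
  · exact (div_eq_one_div_mul_pow_iff n hμ0 (hF n)).1 (h n hn)

end gfact

theorem balance_iff_of_mul_eq_pow {μ F : ℕ → ℝ} {c : ℝ}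
    (hμ : ∀ n, μ n * F n = μ 0 * c ^ n) (hF : ∀ n, F n ≠ 0) (hμ0 : μ 0 ≠ 0) (hc : c ≠ 0)
    (a b : ℝ) (α k : ℕ) :
    a * μ (α + k) * μ 0 = μ α * μ k * b ↔ a * (F α * F k) = F (α + k) * b := by
  have hclosed : ∀ n, μ n = μ 0 * c ^ n / F n := fun n => by
    rw [eq_div_iff (hF n), hμ]
  rw [hclosed (α + k), hclosed α, hclosed k]
  field_simp
  rw [div_eq_div_iff (hF _) (mul_ne_zero (hF _) (hF _)), ← pow_add,
    ← mul_right_inj' (pow_ne_zero (α + k) hc) (b := a * F α * F k)]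
  constructor <;> intro h <;> linear_combination h

theorem stmt4_general
    (μ : ℕ → ℝ) (hμ : ∀ n : ℕ, 0 < μ n)
    (g : ℕ → ℕ → ℝ)
    (hg1 : ∀ α : ℕ, 1 ≤ α → 0 < g 1 α) :
    (∀ k α : ℕ, 1 ≤ k → 1 ≤ α →
        g k (α + k) * μ (α + k) * μ 0 = μ α * μ k * g k k)
      ↔ ((∀ α : ℕ, 1 ≤ α →
            μ α / μ 0
              = (1 / gfact (fun n => g 1 n) α) * (μ 1 * g 1 1 / μ 0) ^ α)
        ∧ (∀ k α : ℕ, 1 ≤ k → k ≤ α →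
            g k α * (gfact (fun n => g 1 n) (α - k) * gfact (fun n => g 1 n) k)
              = gfact (fun n => g 1 n) α * g k k)) := by
  have hF : ∀ n, gfact (fun n => g 1 n) n ≠ 0 := gfact_ne_zero fun n hn => (hg1 n hn).ne'
  have hμ0 : μ 0 ≠ 0 := (hμ 0).ne'
  have hc : μ 1 * g 1 1 / μ 0 ≠ 0 := (div_pos (mul_pos (hμ 1) (hg1 1 le_rfl)) (hμ 0)).ne'
  rw [forall_div_eq_iff_forall_mul_gfact hμ0 hF]
  constructor
  · intro hbal
    have hclosed := mul_gfact_eq_of_recurrence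
      (recurrence_of_balance (g1 := g 1) hμ0 fun n hn => hbal 1 n le_rfl hn)
    refine ⟨hclosed, fun k α hk hkα => ?_⟩
    obtain ⟨β, rfl⟩ := Nat.exists_eq_add_of_le' hkα
    rw [Nat.add_sub_cancel]
    rcases Nat.eq_zero_or_pos β with rfl | hβ
    · rw [zero_add, gfact_zero]
      ring
    · exact (balance_iff_of_mul_eq_pow hclosed hF hμ0 hc _ _ β k).1 (hbal k β hk hβ)
  · rintro ⟨hμ_closed, hg_closed⟩ k α hk hα
    have hg := hg_closed k (α + k) hk (by omega)
    rw [Nat.add_sub_cancel] at hg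
    exact (balance_iff_of_mul_eq_pow hμ_closed hF hμ0 hc _ _ α k).2 hg

/-- explicit form of the rates and of the marginal for a
mass-migration zero-range process with product invariant measures.  `g k α`
is the rate at which `k` particles leave a site occupied by `α` particles. -/
theorem stmt4
    (μ : ℕ → ℝ) (hμ : ∀ n : ℕ, 0 < μ n)
    (g : ℕ → ℕ → ℝ) (hgnn : ∀ k α : ℕ, 0 ≤ g k α)
    (hgz : ∀ k α : ℕ, (α < k ∨ k = 0) → g k α = 0)
    (hg1 : ∀ α : ℕ, 1 ≤ α → 0 < g 1 α) :
    (∀ k α : ℕ, 1 ≤ k → 1 ≤ α →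
        g k (α + k) * μ (α + k) * μ 0 = μ α * μ k * g k k)
      ↔ ((∀ α : ℕ, 1 ≤ α →
            μ α / μ 0
              = (1 / gfact (fun n => g 1 n) α) * (μ 1 * g 1 1 / μ 0) ^ α)
        ∧ (∀ k α : ℕ, 1 ≤ k → k ≤ α →
            g k α * (gfact (fun n => g 1 n) (α - k) * gfact (fun n => g 1 n) k)
              = gfact (fun n => g 1 n) α * g k k)) :=
  stmt4_general μ hμ g hg1
end

section
/- Let μ : ℕ → (0,∞). Define Δ_r(s) = μ(r+s)/μ(r) − μ(r+s−1)/μ(r−1) for integers r ≥ 1, s ≥ 0, and define H_α(β,k) for α ≥ 1, 1 ≤ k ≤ β by the recursion H_α(β,β) = Δ_α(β)·μ(0) for β ≥ 1, and H_α(β,k) = Δ_α(k)·μ(β−k) + Σ_{l=1}^{β−k} Δ_α(l)·H_l(β−l,k) for β ≥ 2 and 1 ≤ k ≤ β−1. Let g^k_{*,0} ≥ 0 be arbitrary for k ≥ 1, and define g^α_{*,β} := g^α_{*,0} + (1/μ(β))·Σ_{k=1}^{β} H_α(β,k)·g^k_{*,0} for α ≥ 1, β ≥ 1. Then for all α ≥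 1 and β ≥ 1, g^α_{*,β} = g^α_{*,0} + Σ_{k=1}^{β} (μ(β−k)/μ(β))·(μ(α+k)/μ(α) − μ(α+k−1)/μ(α−1))·g^k_{*,β−k}. -/
/-- the rates of a mass-migration target process defined
through the coefficients `H` solve the invariance recursion.  `gs α β` is the
rate at which `α` particles jump onto a site occupied by `β` particles
(`gs α 0 = g0 α` arbitrary), and `μ n > 0` is the single-site marginal weight
of a candidate product invariant measure. -/
theorem stmt5
    (μ : ℕ → ℝ) (hμ : ∀ n : ℕ, 0 < μ n)
    (Δ : ℕ → ℕ → ℝ)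
    (hΔ : ∀ r s : ℕ, 1 ≤ r →
      Δ r s = μ (r + s) / μ r - μ (r + s - 1) / μ (r - 1))
    (H : ℕ → ℕ → ℕ → ℝ)
    (hHdiag : ∀ α β : ℕ, 1 ≤ α → 1 ≤ β → H α β β = Δ α β * μ 0)
    (hHrec : ∀ α β k : ℕ, 1 ≤ α → 2 ≤ β → 1 ≤ k → k ≤ β - 1 →
      H α β k = Δ α k * μ (β - k)
        + ∑ l ∈ Finset.Icc 1 (β - k), Δ α l * H l (β - l) k)
    (g0 : ℕ → ℝ) (hg0nn : ∀ k : ℕ, 0 ≤ g0 k)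
    (gs : ℕ → ℕ → ℝ)
    (hgs0 : ∀ α : ℕ, gs α 0 = g0 α)
    (hgs : ∀ α β : ℕ, 1 ≤ α → 1 ≤ β →
      gs α β = g0 α + (1 / μ β) * ∑ k ∈ Finset.Icc 1 β, H α β k * g0 k) :
    ∀ α β : ℕ, 1 ≤ α → 1 ≤ β →
      gs α β = gs α 0
        + ∑ k ∈ Finset.Icc 1 β,
            (μ (β - k) / μ β)
              * (μ (α + k) / μ α - μ (α + k - 1) / μ (α - 1))
              * gs k (β - k) := by

  intro α β hα hβ
  have hμne : ∀ n : ℕ, μ n ≠ 0 := fun n => (hμ n).ne'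
  have hsplit : Finset.Icc 1 β = insert β (Finset.Icc 1 (β - 1)) := by
    ext x; simp only [Finset.mem_Icc, Finset.mem_insert]; omega
  have hβnot : β ∉ Finset.Icc 1 (β - 1) := by
    simp only [Finset.mem_Icc]; omega
  -- key summation identity for H
  have key : ∑ k ∈ Finset.Icc 1 β, H α β k * g0 k
      = Δ α β * μ 0 * g0 β
        + ∑ k ∈ Finset.Icc 1 (β - 1), Δ α k * μ (β - k) * g0 k
        + ∑ l ∈ Finset.Icc 1 (β - 1),
            Δ α l * ∑ j ∈ Finset.Icc 1 (β - l), H l (β - l) j * g0 j := by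
    rw [hsplit, Finset.sum_insert hβnot, hHdiag α β hα hβ]
    have hrw : ∀ k ∈ Finset.Icc 1 (β - 1), H α β k * g0 k
        = Δ α k * μ (β - k) * g0 k
          + ∑ l ∈ Finset.Icc 1 (β - k), Δ α l * (H l (β - l) k * g0 k) := by
      intro k hk
      simp only [Finset.mem_Icc] at hk
      rw [hHrec α β k hα (by omega) hk.1 hk.2, add_mul, Finset.sum_mul]
      congr 1
      apply Finset.sum_congr rfl
      intro l _
      ring
    rw [Finset.sum_congr rfl hrw, Finset.sum_add_distrib]
    have comm : ∑ k ∈ Finset.Icc 1 (β - 1), ∑ l ∈ Finset.Icc 1 (β - k),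
          Δ α l * (H l (β - l) k * g0 k)
        = ∑ l ∈ Finset.Icc 1 (β - 1), ∑ k ∈ Finset.Icc 1 (β - l),
          Δ α l * (H l (β - l) k * g0 k) := by
      apply Finset.sum_comm'
      intro x y
      simp only [Finset.mem_Icc]
      omega
    rw [comm]
    simp only [Finset.mul_sum]
    ring
  rw [hgs α β hα hβ, hgs0, key, hsplit, Finset.sum_insert hβnot, Nat.sub_self,
    hgs0, ← hΔ α β hα]
  have hterm : ∀ k ∈ Finset.Icc 1 (β - 1),
      (μ (β - k) / μ β) * (μ (α + k) / μ α - μ (α + k - 1) / μ (α - 1))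
          * gs k (β - k)
      = (1 / μ β) * (Δ α k * μ (β - k) * g0 k)
        + (1 / μ β) * (Δ α k * ∑ j ∈ Finset.Icc 1 (β - k), H k (β - k) j * g0 j) := by
    intro k hk
    simp only [Finset.mem_Icc] at hk
    rw [← hΔ α k hα, hgs k (β - k) hk.1 (by omega)]
    field_simp [hμne]
  rw [Finset.sum_congr rfl hterm, Finset.sum_add_distrib, ← Finset.mul_sum,
    ← Finset.mul_sum]
  ring
end

section
/- Let μ : ℕ → (0,∞). Define Δ_r(s) = μ(r+s)/μ(r) − μ(r+s−1)/μ(r−1) for integers r ≥ 1, s ≥ 0, and define H_α(β,k) for α ≥ 1, 1 ≤ k ≤ β by the recursion H_α(β,β) = Δ_α(β)·μ(0) for β ≥ 1, and H_α(β,k) = Δ_α(k)·μ(β−k) + Σ_{l=1}^{β−k} Δ_α(l)·H_l(β−l,k) for β ≥ 2 and 1 ≤ k ≤ β−1. Then H also satisfies the dual recursion: H_α(β,β) = Δ_α(β)·μ(0) for β ≥ 1, and H_α(β,k) = Δ_α(k)·μ(β−k) + Σ_{l=1}^{β−k} H_α(β−k,l)·Δ_l(k) for β ≥ 2 and 1 ≤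 k ≤ β−1. -/
open Finset

lemma sum_Icc_sum_Icc_sub_comm {M : Type*} [AddCommMonoid M] (m : ℕ) (f : ℕ → ℕ → M) :
    ∑ i ∈ Icc 1 m, ∑ j ∈ Icc 1 (m - i), f i j = ∑ j ∈ Icc 1 m, ∑ i ∈ Icc 1 (m - j), f i j :=
  sum_comm' fun i j => by simp only [mem_Icc]; omega

/-- Both recursions expand `F α m k` into the same sum over compositions of `m`, read from the
left or from the right; the induction peels off the first part on one side and the last part on
the other, and the two remainders agree after exchanging the order of summation. -/
theorem dual_recursion_of_recursion {R : Type*} [CommSemiring R]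
    (μ : ℕ → R) (Δ : ℕ → ℕ → R) (F : ℕ → ℕ → ℕ → R)
    (hF : ∀ α m k, 1 ≤ α → 1 ≤ k →
      F α m k = Δ α k * μ m + ∑ l ∈ Icc 1 m, Δ α l * F l (m - l) k) :
    ∀ m α k, 1 ≤ α → 1 ≤ k →
      F α m k = Δ α k * μ m + ∑ l ∈ Icc 1 m, F α (m - l) l * Δ l k := by
  intro m
  induction m using Nat.strong_induction_on with
  | _ m ih =>
  intro α k hα hk
  have expand_first : ∀ i ∈ Icc 1 m, Δ α i * F i (m - i) k =
      Δ α i * Δ i k * μ (m - i) + ∑ j ∈ Icc 1 (m - i), Δ α i * F i (m - i - j) j * Δ j k := by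
    intro i hi
    obtain ⟨hi1, him⟩ := mem_Icc.mp hi
    rw [ih (m - i) (by omega) i k hi1 hk, mul_add, mul_sum, ← mul_assoc]
    simp only [mul_assoc]
  have expand_last : ∀ j ∈ Icc 1 m, F α (m - j) j * Δ j k =
      Δ α j * Δ j k * μ (m - j) + ∑ i ∈ Icc 1 (m - j), Δ α i * F i (m - j - i) j * Δ j k := by
    intro j hj
    rw [hF α (m - j) j hα (mem_Icc.mp hj).1, add_mul, sum_mul, mul_right_comm]
  rw [hF α m k hα hk, sum_congr rfl expand_first, sum_congr rfl expand_last, sum_add_distrib,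
    sum_add_distrib, sum_Icc_sum_Icc_sub_comm]
  simp only [Nat.sub_right_comm m]

/-- Indexing by the excess `m = β - k` removes the truncated subtractions and makes the diagonal
case the instance `m = 0` of the recursion. -/
lemma recursion_shift {R : Type*} [CommSemiring R] (μ : ℕ → R) (Δ : ℕ → ℕ → R)
    (H : ℕ → ℕ → ℕ → R)
    (hHdiag : ∀ α β : ℕ, 1 ≤ α → 1 ≤ β → H α β β = Δ α β * μ 0)
    (hHrec : ∀ α β k : ℕ, 1 ≤ α → 2 ≤ β → 1 ≤ k → k ≤ β - 1 →
      H α β k = Δ α k * μ (β - k) + ∑ l ∈ Icc 1 (β - k), Δ α l * H l (β - l) k)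
    (α m k : ℕ) (hα : 1 ≤ α) (hk : 1 ≤ k) :
    H α (m + k) k = Δ α k * μ m + ∑ l ∈ Icc 1 m, Δ α l * H l (m - l + k) k := by
  rcases Nat.eq_zero_or_pos m with rfl | hm
  · simpa using hHdiag α k hα hk
  · rw [hHrec α (m + k) k hα (by omega) hk (by omega), Nat.add_sub_cancel]
    refine congrArg _ (sum_congr rfl fun l hl => ?_)
    rw [Nat.sub_add_comm (mem_Icc.mp hl).2]

theorem stmt6_general
    (μ : ℕ → ℝ)
    (Δ : ℕ → ℕ → ℝ)
    (H : ℕ → ℕ → ℕ → ℝ)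
    (hHdiag : ∀ α β : ℕ, 1 ≤ α → 1 ≤ β → H α β β = Δ α β * μ 0)
    (hHrec : ∀ α β k : ℕ, 1 ≤ α → 2 ≤ β → 1 ≤ k → k ≤ β - 1 →
      H α β k = Δ α k * μ (β - k)
        + ∑ l ∈ Finset.Icc 1 (β - k), Δ α l * H l (β - l) k) :
    (∀ α β : ℕ, 1 ≤ α → 1 ≤ β → H α β β = Δ α β * μ 0) ∧
    (∀ α β k : ℕ, 1 ≤ α → 2 ≤ β → 1 ≤ k → k ≤ β - 1 →
      H α β k = Δ α k * μ (β - k)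
        + ∑ l ∈ Finset.Icc 1 (β - k), H α (β - k) l * Δ l k) := by
  refine ⟨hHdiag, fun α β k hα _ hk hkβ => ?_⟩
  obtain ⟨m, rfl⟩ : ∃ m, β = m + k := ⟨β - k, by omega⟩
  have hdual := dual_recursion_of_recursion μ Δ (fun α m k => H α (m + k) k)
    (recursion_shift μ Δ H hHdiag hHrec) m α k hα hk
  rw [Nat.add_sub_cancel, hdual]
  refine congrArg _ (sum_congr rfl fun l hl => ?_)
  rw [Nat.sub_add_cancel (mem_Icc.mp hl).2]

/-- the coefficients `H` of a mass-migration target process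
satisfy the dual recursion. -/
theorem stmt6
    (μ : ℕ → ℝ) (hμ : ∀ n : ℕ, 0 < μ n)
    (Δ : ℕ → ℕ → ℝ)
    (hΔ : ∀ r s : ℕ, 1 ≤ r →
      Δ r s = μ (r + s) / μ r - μ (r + s - 1) / μ (r - 1))
    (H : ℕ → ℕ → ℕ → ℝ)
    (hHdiag : ∀ α β : ℕ, 1 ≤ α → 1 ≤ β → H α β β = Δ α β * μ 0)
    (hHrec : ∀ α β k : ℕ, 1 ≤ α → 2 ≤ β → 1 ≤ k → k ≤ β - 1 →
      H α β k = Δ α k * μ (β - k)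
        + ∑ l ∈ Finset.Icc 1 (β - k), Δ α l * H l (β - l) k) :
    (∀ α β : ℕ, 1 ≤ α → 1 ≤ β → H α β β = Δ α β * μ 0) ∧
    (∀ α β k : ℕ, 1 ≤ α → 2 ≤ β → 1 ≤ k → k ≤ β - 1 →
      H α β k = Δ α k * μ (β - k)
        + ∑ l ∈ Finset.Icc 1 (β - k), H α (β - k) l * Δ l k) :=
  stmt6_general μ Δ H hHdiag hHrec
end

section
/- Let μ : ℕ → (0,∞). Define Δ_r(s) = μ(r+s)/μ(r) − μ(r+s−1)/μ(r−1) for integers r ≥ 1, s ≥ 0, and define H_α(β,k) for α ≥ 1, 1 ≤ k ≤ β by the recursion H_α(β,β) = Δ_α(β)·μ(0) for β ≥ 1, and H_α(β,k) = Δ_α(k)·μ(β−k) + Σ_{l=1}^{β−k} Δ_α(l)·H_l(β−l,k) for β ≥ 2 and 1 ≤ k ≤ β−1. Then for all β ≥ 2 and 1 ≤ k ≤ β−1, Σ_{l=1}^{β−k} μ(l)·H_l(β−l,k) = μ(0)·μ(β) − μ(k)·μ(β−k). -/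
/-!
Unfolding its recursion, `H α β k` is the sum over chains `α → a₁ → ⋯ → aₙ = k` (`n ≥ 1`)
with `a₁ + ⋯ + aₙ ≤ β` of `Δ α a₁ ⋯ Δ aₙ₋₁ aₙ` times `μ` of the leftover mass. Such chain sums
obey a last-step recursion as well as the first-step one that defines them. Expanding the
weighted sum `∑ₗ μ l · H l (β - l) k` by the last step and using induction on `β`, everything
reduces to `μ 0 μ (β - k) ∑_{i ≤ β - k} Δ i k`, and this sum telescopes to
`μ β / μ (β - k) - μ k / μ 0`.
-/

open Finset

theorem sum_mul_sum_mul_comm {R ι κ : Type*} [Semiring R] (s : Finset ι) (t : Finset κ)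
    (c : ι → R) (f : ι → κ → R) (x : κ → R) :
    ∑ l ∈ s, c l * ∑ i ∈ t, f l i * x i = ∑ i ∈ t, (∑ l ∈ s, c l * f l i) * x i := by
  simp_rw [mul_sum, sum_mul, mul_assoc]
  exact sum_comm

section ChainSum

variable {R : Type*} [CommSemiring R] (μ : ℕ → R) (Δ : ℕ → ℕ → R)

/-- The sum over chains `a = a₀ → a₁ → ⋯ → aₙ = j` with `n ≥ 1`, all `aᵢ ≥ 1` and
`a₁ + ⋯ + aₙ ≤ q` of `Δ a₀ a₁ * ⋯ * Δ aₙ₋₁ aₙ * μ (q - a₁ - ⋯ - aₙ)`. -/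
def chainSum (a q j : ℕ) : R :=
  ∑ l ∈ (Icc 1 q).attach,
    Δ a l * ((if (l : ℕ) = j then μ (q - l) else 0) + chainSum l (q - l) j)
termination_by q
decreasing_by have := mem_Icc.mp l.2; omega

theorem chainSum_eq (a q j : ℕ) :
    chainSum μ Δ a q j =
      ∑ l ∈ Icc 1 q, Δ a l * ((if l = j then μ (q - l) else 0) + chainSum μ Δ l (q - l) j) := by
  rw [chainSum, sum_attach (Icc 1 q)
    fun l => Δ a l * ((if l = j then μ (q - l) else 0) + chainSum μ Δ l (q - l) j)]

theorem chainSum_of_lt {a q j : ℕ} (h : q < j) : chainSum μ Δ a q j = 0 := by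
  induction q using Nat.strong_induction_on generalizing a with
  | _ q ih =>
    rw [chainSum_eq]
    refine sum_eq_zero fun l hl => ?_
    have hl := mem_Icc.mp hl
    rw [if_neg (by omega), ih (q - l) (by omega) (by omega), add_zero, mul_zero]

theorem sum_mul_chainSum_eq_sum_Icc_sub (c : ℕ → R) (n i : ℕ) :
    ∑ l ∈ Icc 1 n, c l * chainSum μ Δ l (n - l) i =
      ∑ l ∈ Icc 1 (n - i), c l * chainSum μ Δ l (n - l) i := by
  refine (sum_subset (Icc_subset_Icc_right (Nat.sub_le n i)) fun l hl hl' => ?_).symm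
  rw [mem_Icc] at hl hl'
  rw [chainSum_of_lt μ Δ (by omega), mul_zero]

theorem chainSum_eq_of_mem_Icc {a q j : ℕ} (hj : j ∈ Icc 1 q) :
    chainSum μ Δ a q j =
      Δ a j * μ (q - j) + ∑ l ∈ Icc 1 (q - j), Δ a l * chainSum μ Δ l (q - l) j := by
  rw [chainSum_eq, ← sum_mul_chainSum_eq_sum_Icc_sub]
  simp only [mul_add, sum_add_distrib, mul_ite, mul_zero, sum_ite_eq', if_pos hj]

theorem sum_chainSum_mul {a p N : ℕ} (hp : p ≤ N) (x : ℕ → R) :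
    ∑ i ∈ Icc 1 N, chainSum μ Δ a p i * x i =
      ∑ l ∈ Icc 1 p,
        Δ a l * (μ (p - l) * x l + ∑ i ∈ Icc 1 N, chainSum μ Δ l (p - l) i * x i) := by
  have hsingle : ∑ i ∈ Icc 1 N, (∑ l ∈ Icc 1 p, Δ a l * if l = i then μ (p - l) else 0) * x i =
      ∑ l ∈ Icc 1 p, Δ a l * (μ (p - l) * x l) := by
    simp_rw [mul_ite, mul_zero, sum_mul, ite_mul, zero_mul]
    rw [sum_comm]
    refine sum_congr rfl fun l hl => ?_
    rw [sum_ite_eq, if_pos (Icc_subset_Icc_right hp hl), mul_assoc]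
  simp only [chainSum_eq μ Δ a p, mul_add, add_mul, sum_add_distrib, hsingle,
    sum_mul_sum_mul_comm]

/-- Decomposition of a chain by its last step `i → j`. -/
theorem chainSum_eq_last {N a q j : ℕ} (hj : j ∈ Icc 1 q) (hN : q - j ≤ N) :
    chainSum μ Δ a q j =
      μ (q - j) * Δ a j + ∑ i ∈ Icc 1 N, chainSum μ Δ a (q - j) i * Δ i j := by
  induction q using Nat.strong_induction_on generalizing a with
  | _ q ih =>
    have hj := mem_Icc.mp hj
    rw [chainSum_eq_of_mem_Icc μ Δ (mem_Icc.mpr hj), sum_chainSum_mul μ Δ hN, mul_comm (Δ a j)]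
    congr 1
    refine sum_congr rfl fun l hl => ?_
    have hl := mem_Icc.mp hl
    rw [ih (q - l) (by omega) (mem_Icc.mpr ⟨hj.1, by omega⟩) (by omega), Nat.sub_right_comm]

theorem H_eq_chainSum (H : ℕ → ℕ → ℕ → R)
    (hHdiag : ∀ α β : ℕ, 1 ≤ α → 1 ≤ β → H α β β = Δ α β * μ 0)
    (hHrec : ∀ α β k : ℕ, 1 ≤ α → 2 ≤ β → 1 ≤ k → k ≤ β - 1 →
      H α β k = Δ α k * μ (β - k) + ∑ l ∈ Icc 1 (β - k), Δ α l * H l (β - l) k)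
    {a β k : ℕ} (ha : 1 ≤ a) (hk : k ∈ Icc 1 β) : H a β k = chainSum μ Δ a β k := by
  induction β using Nat.strong_induction_on generalizing a with
  | _ β ih =>
    rw [chainSum_eq_of_mem_Icc μ Δ hk]
    obtain ⟨hk1, hkβ⟩ := mem_Icc.mp hk
    rcases hkβ.eq_or_lt with rfl | hlt
    · simp [hHdiag a k ha hk1]
    · rw [hHrec a β k ha (by omega) hk1 (by omega)]
      congr 1
      refine sum_congr rfl fun l hl => ?_
      have hl := mem_Icc.mp hl
      rw [ih (β - l) (by omega) hl.1 (mem_Icc.mpr ⟨hk1, by omega⟩)]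

end ChainSum

section Telescoping

variable {K : Type*} [Field K] (μ : ℕ → K) (Δ : ℕ → ℕ → K)

theorem sum_Icc_Δ
    (hΔ : ∀ r s : ℕ, 1 ≤ r → Δ r s = μ (r + s) / μ r - μ (r + s - 1) / μ (r - 1))
    (j p : ℕ) : ∑ i ∈ Icc 1 p, Δ i j = μ (p + j) / μ p - μ j / μ 0 := by
  induction p with
  | zero => simp
  | succ p ih =>
    rw [sum_Icc_succ_top (by omega), ih, hΔ (p + 1) j (by omega), Nat.add_sub_cancel,
      show p + 1 + j - 1 = p + j by omega]
    ring

theorem sum_mul_chainSum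
    (hΔ : ∀ r s : ℕ, 1 ≤ r → Δ r s = μ (r + s) / μ r - μ (r + s - 1) / μ (r - 1))
    (hμ : ∀ n, μ n ≠ 0) {m j : ℕ} (hj : j ∈ Icc 1 m) :
    ∑ l ∈ Icc 1 (m - j), μ l * chainSum μ Δ l (m - l) j = μ 0 * μ m - μ j * μ (m - j) := by
  induction m using Nat.strong_induction_on generalizing j with
  | _ m ih =>
    have hj := mem_Icc.mp hj
    calc ∑ l ∈ Icc 1 (m - j), μ l * chainSum μ Δ l (m - l) j
        = ∑ l ∈ Icc 1 (m - j), μ l * (μ (m - j - l) * Δ l j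
            + ∑ i ∈ Icc 1 (m - j), chainSum μ Δ l (m - j - l) i * Δ i j) := by
          refine sum_congr rfl fun l hl => ?_
          have hl := mem_Icc.mp hl
          rw [chainSum_eq_last μ Δ (N := m - j) (mem_Icc.mpr ⟨hj.1, by omega⟩) (by omega),
            Nat.sub_right_comm]
      _ = ∑ l ∈ Icc 1 (m - j), μ l * μ (m - j - l) * Δ l j
            + ∑ i ∈ Icc 1 (m - j), (μ 0 * μ (m - j) - μ i * μ (m - j - i)) * Δ i j := by
          simp only [mul_add, sum_add_distrib, sum_mul_sum_mul_comm, mul_assoc]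
          congr 1
          refine sum_congr rfl fun i hi => ?_
          rw [sum_mul_chainSum_eq_sum_Icc_sub, ih (m - j) (by omega) hi]
      _ = μ 0 * μ (m - j) * ∑ i ∈ Icc 1 (m - j), Δ i j := by
          simp only [sub_mul, sum_sub_distrib, mul_sum]
          ring
      _ = μ 0 * μ m - μ j * μ (m - j) := by
          rw [sum_Icc_Δ μ Δ hΔ, Nat.sub_add_cancel hj.2]
          field_simp [hμ 0, hμ (m - j)]

end Telescoping

/-- summation identity for the coefficients `H` of a
mass-migration target process. -/
theorem stmt7
    (μ : ℕ → ℝ) (hμ : ∀ n : ℕ, 0 < μ n)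
    (Δ : ℕ → ℕ → ℝ)
    (hΔ : ∀ r s : ℕ, 1 ≤ r →
      Δ r s = μ (r + s) / μ r - μ (r + s - 1) / μ (r - 1))
    (H : ℕ → ℕ → ℕ → ℝ)
    (hHdiag : ∀ α β : ℕ, 1 ≤ α → 1 ≤ β → H α β β = Δ α β * μ 0)
    (hHrec : ∀ α β k : ℕ, 1 ≤ α → 2 ≤ β → 1 ≤ k → k ≤ β - 1 →
      H α β k = Δ α k * μ (β - k)
        + ∑ l ∈ Finset.Icc 1 (β - k), Δ α l * H l (β - l) k) :
    ∀ β k : ℕ, 2 ≤ β → 1 ≤ k → k ≤ β - 1 →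
      ∑ l ∈ Finset.Icc 1 (β - k), μ l * H l (β - l) k
        = μ 0 * μ β - μ k * μ (β - k) := by
  intro β k _ hk hkβ
  rw [← sum_mul_chainSum μ Δ hΔ (fun n => (hμ n).ne') (mem_Icc.mpr ⟨hk, by omega⟩)]
  refine sum_congr rfl fun l hl => ?_
  have hl := mem_Icc.mp hl
  rw [H_eq_chainSum μ Δ H hHdiag hHrec hl.1 (mem_Icc.mpr ⟨hk, by omega⟩)]
end

section
/- Let (g^k_{α,β}) be a family of mass-migration rates and set Σ^k_{α,β} := Σ_{k'=k+1}^{α} g^{k'}_{α,β} (equal to 0 when k ≥ α). The following two conditions are equivalent: (I) for all α ≤ γ and β ≤ δ in ℕ, and all l ≥ 0, Σ^{(δ−β)+l}_{α,β} ≤ Σ^{l}_{γ,δ}, and for all k ≥ 0, Σ^{k}_{α,β} ≥ Σ^{(γ−α)+k}_{γ,δ}; (II) for all α ≥ 1, β ≥ 0 and k ≥ 0, Σ^{k+1}_{α+1,β} ≤ Σ^{k}_{α,β} ≤ Σ^{k}_{α+1,β} and Σ^{k+1}_{α,β} ≤ Σ^{k}_{α,β+1} ≤ Σ^{k}_{α,β}.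 -/
/-- Tail sums of the rates: `Σ^k_{α,β} = Σ_{k' = k+1}^{α} g^{k'}_{α,β}`. -/
def Sig (g : ℕ → ℕ → ℕ → ℝ) (k α β : ℕ) : ℝ :=
  ∑ k' ∈ Finset.Icc (k + 1) α, g k' α β

/-- equivalence between the two forms of the attractiveness
condition for mass migration processes. -/
theorem stmt9
    (g : ℕ → ℕ → ℕ → ℝ)
    (hgnn : ∀ k α β : ℕ, 0 ≤ g k α β)
    (hg0 : ∀ α β : ℕ, g 0 α β = 0)
    (hgz : ∀ k α β : ℕ, α < k ∨ α = 0 → g k α β = 0) :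
    (∀ α β γ δ : ℕ, α ≤ γ → β ≤ δ →
        (∀ l : ℕ, Sig g (δ - β + l) α β ≤ Sig g l γ δ) ∧
        (∀ k : ℕ, Sig g (γ - α + k) γ δ ≤ Sig g k α β))
      ↔ (∀ α β k : ℕ, 1 ≤ α →
          (Sig g (k + 1) (α + 1) β ≤ Sig g k α β ∧
            Sig g k α β ≤ Sig g k (α + 1) β) ∧
          (Sig g (k + 1) α β ≤ Sig g k α (β + 1) ∧
            Sig g k α (β + 1) ≤ Sig g k α β)) := by
  have hnn : ∀ k α β, 0 ≤ Sig g k α β := fun k α β =>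
    Finset.sum_nonneg fun i _ => hgnn i α β
  have hz : ∀ k β, Sig g k 0 β = 0 := by
    intro k β
    rw [Sig, Finset.Icc_eq_empty (by omega), Finset.sum_empty]
  constructor
  · intro h α β k hα
    refine ⟨⟨?_, ?_⟩, ?_, ?_⟩
    · have := (h α β (α + 1) β (by omega) le_rfl).2 k
      rwa [show α + 1 - α + k = k + 1 by omega] at this
    · have := (h α β (α + 1) β (by omega) le_rfl).1 k
      rwa [show β - β + k = k by omega] at this
    · have := (h α β α (β + 1) le_rfl (by omega)).1 k
      rwa [show β + 1 - β + k = k + 1 by omega] at this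
    · have := (h α β α (β + 1) le_rfl (by omega)).2 k
      rwa [show α - α + k = k by omega] at this
  · intro h
    -- single-step lemmas valid for all α (including α = 0)
    have L1 : ∀ k α β, Sig g k α β ≤ Sig g k (α + 1) β := by
      intro k α β
      rcases Nat.eq_zero_or_pos α with rfl | hα
      · rw [hz]; exact hnn _ _ _
      · exact (h α β k hα).1.2
    have L2 : ∀ k α β, Sig g (k + 1) (α + 1) β ≤ Sig g k α β := by
      intro k α β
      rcases Nat.eq_zero_or_pos α with rfl | hα
      · rw [hz, Sig, Finset.Icc_eq_empty (by omega), Finset.sum_empty]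
      · exact (h α β k hα).1.1
    have L3 : ∀ k α β, Sig g (k + 1) α β ≤ Sig g k α (β + 1) := by
      intro k α β
      rcases Nat.eq_zero_or_pos α with rfl | hα
      · rw [hz, hz]
      · exact (h α β k hα).2.1
    have L4 : ∀ k α β, Sig g k α (β + 1) ≤ Sig g k α β := by
      intro k α β
      rcases Nat.eq_zero_or_pos α with rfl | hα
      · rw [hz, hz]
      · exact (h α β k hα).2.2
    have A : ∀ n k α β, Sig g k α β ≤ Sig g k (α + n) β := by
      intro n
      induction n with
      | zero => intro k α β; simp
      | succ m ih =>
        intro k α β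
        calc Sig g k α β ≤ Sig g k (α + m) β := ih k α β
        _ ≤ Sig g k (α + m + 1) β := L1 k (α + m) β
    have B : ∀ n k α β, Sig g (n + k) (α + n) β ≤ Sig g k α β := by
      intro n
      induction n with
      | zero => intro k α β; simp
      | succ m ih =>
        intro k α β
        calc Sig g (m + 1 + k) (α + (m + 1)) β
            = Sig g ((m + k) + 1) ((α + m) + 1) β := by ring_nf
        _ ≤ Sig g (m + k) (α + m) β := L2 (m + k) (α + m) β
        _ ≤ Sig g k α β := ih k α β
    have C : ∀ n l α β, Sig g (n + l) α β ≤ Sig g l α (β + n) := by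
      intro n
      induction n with
      | zero => intro l α β; simp
      | succ m ih =>
        intro l α β
        calc Sig g (m + 1 + l) α β = Sig g ((m + l) + 1) α β := by ring_nf
        _ ≤ Sig g (m + l) α (β + 1) := L3 (m + l) α β
        _ ≤ Sig g l ((α : ℕ)) ((β + 1) + m) := ih l α (β + 1)
        _ = Sig g l α (β + (m + 1)) := by ring_nf
    have D : ∀ n k α β, Sig g k α (β + n) ≤ Sig g k α β := by
      intro n
      induction n with
      | zero => intro k α β; simp
      | succ m ih =>
        intro k α β
        calc Sig g k α (β + (m + 1)) = Sig g k α ((β + m) + 1) := by ring_nf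
        _ ≤ Sig g k α (β + m) := L4 k α (β + m)
        _ ≤ Sig g k α β := ih k α β
    intro α β γ δ hαγ hβδ
    obtain ⟨n, rfl⟩ : ∃ n, γ = α + n := ⟨γ - α, by omega⟩
    obtain ⟨m, rfl⟩ : ∃ m, δ = β + m := ⟨δ - β, by omega⟩
    constructor
    · intro l
      rw [show β + m - β = m by omega]
      calc Sig g (m + l) α β ≤ Sig g l α (β + m) := C m l α β
      _ ≤ Sig g l (α + n) (β + m) := A n l α (β + m)
    · intro k
      rw [show α + n - α = n by omega]
      calc Sig g (n + k) (α + n) (β + m) ≤ Sig g k α (β + m) := B n k α (β + m)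
      _ ≤ Sig g k α β := D m k α β
end

section
/- Let g^k_α ≥ 0 be given for integers 1 ≤ k ≤ α (with g^k_α = 0 when k > α or k = 0). The following two conditions are equivalent: (I) for all α ≥ 1 and k ≥ 0, Σ_{k'=k+2}^{α+1} g^{k'}_{α+1} ≤ Σ_{k'=k+1}^{α} g^{k'}_{α} ≤ Σ_{k'=k+1}^{α+1} g^{k'}_{α+1}; (II) for all α ≥ 1 and 1 ≤ m ≤ α, 0 ≤ Σ_{j=0}^{m−1} (g^{α−j}_{α} − g^{α+1−j}_{α+1}) ≤ g^{α+1−m}_{α+1}. -/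
open Finset

private lemma icc_split (f : ℕ → ℝ) (a b : ℕ) (h : a ≤ b) :
    ∑ k' ∈ Icc a b, f k' = f a + ∑ k' ∈ Icc (a + 1) b, f k' := by
  have hins : Icc a b = insert a (Icc (a + 1) b) := by
    rw [Finset.Icc_add_one_left_eq_Ioc, Finset.Ioc_insert_left h]
  rw [hins, Finset.sum_insert (by simp)]

private lemma sumrange (g : ℕ → ℕ → ℝ) (α : ℕ) :
    ∀ m, m ≤ α → ∑ j ∈ range m, g (α - j) α = ∑ k' ∈ Icc (α - m + 1) α, g k' α := by
  intro m
  induction m with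
  | zero => intro _; simp
  | succ n ih =>
    intro h
    rw [Finset.sum_range_succ, ih (by omega)]
    have h1 : α - (n + 1) + 1 = α - n := by omega
    rw [h1, icc_split (fun k' => g k' α) (α - n) α (by omega)]
    have h2 : α - n + 1 = α - (n - 0) + 1 := by omega
    ring

/-- equivalence of the two forms of the attractiveness
condition for mass-migration zero-range processes.  `g k α` is the rate at
which `k` particles leave a site occupied by `α` particles. -/
theorem stmt10
    (g : ℕ → ℕ → ℝ) (hgnn : ∀ k α : ℕ, 0 ≤ g k α)
    (hgz : ∀ k α : ℕ, (α < k ∨ k = 0) → g k α = 0) :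
    (∀ α k : ℕ, 1 ≤ α →
        (∑ k' ∈ Finset.Icc (k + 2) (α + 1), g k' (α + 1)
            ≤ ∑ k' ∈ Finset.Icc (k + 1) α, g k' α ∧
          ∑ k' ∈ Finset.Icc (k + 1) α, g k' α
            ≤ ∑ k' ∈ Finset.Icc (k + 1) (α + 1), g k' (α + 1)))
      ↔ (∀ α m : ℕ, 1 ≤ α → 1 ≤ m → m ≤ α →
          (0 ≤ ∑ j ∈ Finset.range m, (g (α - j) α - g (α + 1 - j) (α + 1)) ∧
            ∑ j ∈ Finset.range m, (g (α - j) α - g (α + 1 - j) (α + 1))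
              ≤ g (α + 1 - m) (α + 1))) := by
  constructor
  · intro hI α m hα hm hmα
    obtain ⟨h1, h2⟩ := hI α (α - m) hα
    have e1 : ∑ j ∈ range m, g (α - j) α = ∑ k' ∈ Icc (α - m + 1) α, g k' α :=
      sumrange g α m hmα
    have e2 : ∑ j ∈ range m, g (α + 1 - j) (α + 1)
        = ∑ k' ∈ Icc (α - m + 2) (α + 1), g k' (α + 1) := by
      have := sumrange g (α + 1) m (by omega)
      rwa [show α + 1 - m + 1 = α - m + 2 by omega] at this
    rw [Finset.sum_sub_distrib, e1, e2]
    have hsplit : ∑ k' ∈ Icc (α - m + 1) (α + 1), g k' (α + 1)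
        = g (α - m + 1) (α + 1) + ∑ k' ∈ Icc (α - m + 2) (α + 1), g k' (α + 1) :=
      icc_split (fun k' => g k' (α + 1)) (α - m + 1) (α + 1) (by omega)
    rw [show α + 1 - m = α - m + 1 by omega]
    constructor
    · linarith
    · linarith
  · intro hII α k hα
    by_cases hk : k < α
    · obtain ⟨h1, h2⟩ := hII α (α - k) hα (by omega) (by omega)
      rw [Finset.sum_sub_distrib] at h1 h2
      have e1 : ∑ j ∈ range (α - k), g (α - j) α = ∑ k' ∈ Icc (k + 1) α, g k' α := by
        have := sumrange g α (α - k) (by omega)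
        rwa [show α - (α - k) + 1 = k + 1 by omega] at this
      have e2 : ∑ j ∈ range (α - k), g (α + 1 - j) (α + 1)
          = ∑ k' ∈ Icc (k + 2) (α + 1), g k' (α + 1) := by
        have := sumrange g (α + 1) (α - k) (by omega)
        rwa [show α + 1 - (α - k) + 1 = k + 2 by omega] at this
      rw [e1, e2] at h1 h2
      rw [show α + 1 - (α - k) = k + 1 by omega] at h2
      have hsplit : ∑ k' ∈ Icc (k + 1) (α + 1), g k' (α + 1)
          = g (k + 1) (α + 1) + ∑ k' ∈ Icc (k + 2) (α + 1), g k' (α + 1) :=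
        icc_split (fun k' => g k' (α + 1)) (k + 1) (α + 1) (by omega)
      constructor
      · linarith
      · linarith
    · have he1 : Icc (k + 1) α = ∅ := Finset.Icc_eq_empty (by omega)
      have he2 : Icc (k + 2) (α + 1) = ∅ := Finset.Icc_eq_empty (by omega)
      rw [he1, he2]
      simp only [Finset.sum_empty]
      exact ⟨le_refl 0, Finset.sum_nonneg fun i _ => hgnn i (α + 1)⟩
end

section
/- Let g^k_{*,β} ≥ 0 be given for integers k ≥ 1 and β ≥ 0, and define mass-migration rates g^k_{α,β} := g^k_{*,β} if 1 ≤ k ≤ α and 0 otherwise; set Σ^k_{α,β} := Σ_{k'=k+1}^{α} g^{k'}_{α,β}. Then the attractiveness conditions [for all α ≥ 1, β ≥ 0 and k ≥ 0: Σ^{k+1}_{α+1,β} ≤ Σ^{k}_{α,β} ≤ Σ^{k}_{α+1,β} and Σ^{k+1}_{α,β} ≤ Σ^{k}_{α,β+1} ≤ Σ^{k}_{α,β}] hold if and only if: (a) for all α ≥ 1 and β ≥ 0, g^{α+1}_{*,β} ≤ g^{α}_{*,β} and g^{α}_{*,β+1} ≤ g^{α}_{*,β}; and (b) for all α ≥ 1,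 β ≥ 0 and k ≥ 0, Σ_{k'=k+2}^{α} g^{k'}_{*,β} ≤ Σ_{k'=k+1}^{α} g^{k'}_{*,β+1}. -/
lemma Sig_eq (gs : ℕ → ℕ → ℝ) (g : ℕ → ℕ → ℕ → ℝ)
    (hg : ∀ k α β : ℕ, g k α β = if 1 ≤ k ∧ k ≤ α then gs k β else 0)
    (k α β : ℕ) : Sig g k α β = ∑ k' ∈ Finset.Icc (k + 1) α, gs k' β := by
  unfold Sig
  refine Finset.sum_congr rfl fun j hj => ?_
  rw [Finset.mem_Icc] at hj
  rw [hg, if_pos ⟨le_trans (Nat.le_add_left 1 k) hj.1, hj.2⟩]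

lemma shift_sum (f : ℕ → ℝ) (a b : ℕ) :
    ∑ j ∈ Finset.Icc (a + 1) (b + 1), f j = ∑ j ∈ Finset.Icc a b, f (j + 1) := by
  rw [← Finset.map_add_right_Icc a b 1, Finset.sum_map]
  rfl

/-- characterization of attractiveness for mass-migration
target processes.  `gs k β` is the rate at which `k` particles jump onto a
site occupied by `β` particles; the associated mass-migration rates are
`g k α β = gs k β` for `1 ≤ k ≤ α` and `0` otherwise. -/
theorem stmt11
    (gs : ℕ → ℕ → ℝ) (hgsnn : ∀ k β : ℕ, 0 ≤ gs k β)
    (g : ℕ → ℕ → ℕ → ℝ)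
    (hg : ∀ k α β : ℕ, g k α β = if 1 ≤ k ∧ k ≤ α then gs k β else 0) :
    (∀ α β k : ℕ, 1 ≤ α →
        (Sig g (k + 1) (α + 1) β ≤ Sig g k α β ∧
          Sig g k α β ≤ Sig g k (α + 1) β) ∧
        (Sig g (k + 1) α β ≤ Sig g k α (β + 1) ∧
          Sig g k α (β + 1) ≤ Sig g k α β))
      ↔ ((∀ α β : ℕ, 1 ≤ α →
            gs (α + 1) β ≤ gs α β ∧ gs α (β + 1) ≤ gs α β)
        ∧ (∀ α β k : ℕ, 1 ≤ α →
            ∑ k' ∈ Finset.Icc (k + 2) α, gs k' β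
              ≤ ∑ k' ∈ Finset.Icc (k + 1) α, gs k' (β + 1))) := by
  simp only [Sig_eq gs g hg]
  constructor
  · intro h
    constructor
    · intro α β hα
      obtain ⟨⟨h1, _⟩, ⟨_, h4⟩⟩ := h α β (α - 1) hα
      rw [Nat.sub_add_cancel hα] at h1 h4
      constructor
      · simpa using h1
      · simpa using h4
    · intro α β k hα
      exact (h α β k hα).2.1
  · rintro ⟨ha, hb⟩ α β k hα
    refine ⟨⟨?_, ?_⟩, hb α β k hα, ?_⟩
    · have : k + 1 + 1 = k + 1 + 1 := rfl
      rw [show k + 1 + 1 = (k + 1) + 1 from rfl, shift_sum (fun j => gs j β) (k + 1) α]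
      refine Finset.sum_le_sum fun j hj => ?_
      rw [Finset.mem_Icc] at hj
      exact (ha j β (le_trans (Nat.le_add_left 1 k) hj.1)).1
    · refine Finset.sum_le_sum_of_subset_of_nonneg
        (Finset.Icc_subset_Icc_right (Nat.le_succ α)) fun j _ _ => hgsnn j β
    · refine Finset.sum_le_sum fun j hj => ?_
      rw [Finset.mem_Icc] at hj
      exact (ha j β (le_trans (Nat.le_add_left 1 k) hj.1)).2
end

section
/- Let (g^k_{α,β}) be a family of mass-migration rates, set Σ^k_{α,β} := Σ_{k'=k+1}^{α} g^{k'}_{α,β}, and let G^{k,l}_{α,β,γ,δ} be the coupling rates. Then for all α, β, γ, δ ∈ ℕ, Σ_{k=0}^{α} Σ_{l=0}^{γ} |k−l|·G^{k,l}_{α,β,γ,δ} ≤ 2·Σ_{i=1}^{max(α,γ)} i·|g^i_{α,β} − g^i_{γ,δ}|. In particular, if the rates satisfy condition (C2) with constant C, then Σ_{k=0}^{α} Σ_{l=0}^{γ} |k−l|·G^{k,l}_{α,β,γ,δ} ≤ 2C·(|α−γ| + |β−δ|). -/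
/-- The coupling rates `G^{k,l}_{α,β,γ,δ}` of the mass migration process. -/
def Gc (g : ℕ → ℕ → ℕ → ℝ) (k l α β γ δ : ℕ) : ℝ :=
  if k = 0 then
    (if l = 0 then 0 else
      g l γ δ - min (g l γ δ)
        (Sig g 0 α β - min (Sig g 0 α β) (Sig g l γ δ)))
  else if l = 0 then
    g k α β - min (g k α β)
      (Sig g 0 γ δ - min (Sig g 0 γ δ) (Sig g k α β))
  else
    min
      (g k α β - min (g k α β)
        (Sig g l γ δ - min (Sig g l γ δ) (Sig g k α β)))
      (g l γ δ - min (g l γ δ)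
        (Sig g k α β - min (Sig g k α β) (Sig g l γ δ)))

open Finset

/-!
Writing `A_j = Σ^j_{α,β}` and `B_j = Σ^j_{γ,δ}` (both decreasing in `j`, vanishing from `α`
resp. `γ` on), `G^{k,l}` is the monotone (quantile) coupling: for `k, l ≥ 1` it is the length of
`[A_k, A_{k-1}) ∩ [B_l, B_{l-1})`, and `k = 0` or `l = 0` stands for the half-line above `A_0`
resp. `B_0`. Hence the mass that `G` puts on `{l ≤ j < k}` is `(A_j - B_j)⁺`, and since `|k - l|`
counts the levels `j` between `k` and `l`, the transport cost `Σ |k - l| G^{k,l}` equals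
`Σ_j |A_j - B_j|`. Each `|A_j - B_j|` is at most `Σ_{i > j} |g^i_{α,β} - g^i_{γ,δ}|`, and
summing over `j` counts the `i`-th term `i` times.
-/

lemma min_sub_min_sub_eq_clamp_sub_clamp (a A b B : ℝ) (hb : 0 ≤ b) :
    min (a - min a (B - min B A)) (b - min b (A - min A B))
      = min (a + A) (max A (b + B)) - min (a + A) (max A B) := by
  grind

lemma sub_min_sub_eq_sub_clamp (a A c : ℝ) :
    a - min a (c - min c A) = a + A - min (a + A) (max A c) := by
  grind

lemma add_sub_clamp_eq_max_sub_max {a : ℝ} (ha : 0 ≤ a) (A t : ℝ) :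
    a + A - min (a + A) (max A t) = max (a + A) t - max A t := by
  grind

lemma sum_range_sum_range_tsub_smul {M : Type*} [AddCommMonoid M] {a N : ℕ} (haN : a ≤ N)
    (c : ℕ) (F : ℕ → ℕ → M) :
    ∑ k ∈ range (a + 1), ∑ l ∈ range (c + 1), (k - l) • F k l
      = ∑ j ∈ range N, ∑ k ∈ Icc (j + 1) a, ∑ l ∈ range (min j c + 1), F k l := by
  calc ∑ k ∈ range (a + 1), ∑ l ∈ range (c + 1), (k - l) • F k l
      = ∑ k ∈ range (a + 1), ∑ l ∈ range (c + 1), ∑ _j ∈ Ico l k, F k l := by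
        simp only [sum_const, Nat.card_Ico]
    _ = ∑ k ∈ range (a + 1), ∑ j ∈ range k, ∑ l ∈ range (min j c + 1), F k l := by
        refine sum_congr rfl fun k _ => sum_comm' fun l j => ?_
        simp only [mem_range, mem_Ico]
        omega
    _ = ∑ j ∈ range N, ∑ k ∈ Icc (j + 1) a, ∑ l ∈ range (min j c + 1), F k l :=
        sum_comm' fun k j => by simp only [mem_range, mem_Icc]; omega

lemma sum_range_sum_Icc_eq_sum_Icc_smul {M : Type*} [AddCommMonoid M] (N : ℕ) (f : ℕ → M) :
    ∑ j ∈ range N, ∑ i ∈ Icc (j + 1) N, f i = ∑ i ∈ Icc 1 N, i • f i := by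
  rw [sum_comm' (t' := Icc 1 N) (s' := range) fun j i => by
    simp only [mem_range, mem_Icc]; omega]
  simp only [sum_const, card_range]

variable {g : ℕ → ℕ → ℕ → ℝ}

lemma Sig_nonneg (hg : ∀ k α β, 0 ≤ g k α β) (k α β : ℕ) : 0 ≤ Sig g k α β :=
  sum_nonneg fun i _ => hg i α β

lemma Sig_of_le {k α : ℕ} (h : α ≤ k) (β : ℕ) : Sig g k α β = 0 := by
  rw [Sig, Icc_eq_empty (by omega), sum_empty]

lemma Sig_eq_add_Sig_succ {k α : ℕ} (h : k < α) (β : ℕ) :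
    Sig g k α β = g (k + 1) α β + Sig g (k + 1) α β := by
  rw [Sig, Sig, ← insert_Icc_add_one_left_eq_Icc (show k + 1 ≤ α by omega), sum_insert (by simp)]

lemma Sig_min_self_right (j γ δ : ℕ) : Sig g (min j γ) γ δ = Sig g j γ δ := by
  rcases le_total j γ with h | h
  · rw [min_eq_left h]
  · rw [min_eq_right h, Sig_of_le le_rfl, Sig_of_le h]

lemma Gc_comm (k l α β γ δ : ℕ) : Gc g k l α β γ δ = Gc g l k γ δ α β := by
  unfold Gc
  by_cases hk : k = 0 <;> by_cases hl : l = 0 <;> simp [hk, hl, min_comm]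

lemma Gc_succ_zero {k α : ℕ} (hk : k < α) (β γ δ : ℕ) :
    Gc g (k + 1) 0 α β γ δ
      = Sig g k α β - min (Sig g k α β) (max (Sig g (k + 1) α β) (Sig g 0 γ δ)) := by
  simp only [Gc, Nat.succ_ne_zero, if_false, if_true]
  rw [sub_min_sub_eq_sub_clamp, ← Sig_eq_add_Sig_succ hk]

lemma Gc_succ_succ (hg : ∀ k α β, 0 ≤ g k α β) {k l α γ : ℕ} (hk : k < α) (hl : l < γ)
    (β δ : ℕ) :
    Gc g (k + 1) (l + 1) α β γ δ
      = min (Sig g k α β) (max (Sig g (k + 1) α β) (Sig g l γ δ))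
        - min (Sig g k α β) (max (Sig g (k + 1) α β) (Sig g (l + 1) γ δ)) := by
  simp only [Gc, Nat.succ_ne_zero, if_false]
  rw [min_sub_min_sub_eq_clamp_sub_clamp _ _ _ _ (hg _ _ _), ← Sig_eq_add_Sig_succ hk,
    ← Sig_eq_add_Sig_succ hl]

lemma sum_range_Gc_succ (hg : ∀ k α β, 0 ≤ g k α β) {k α m γ : ℕ} (hk : k < α) (hm : m ≤ γ)
    (β δ : ℕ) :
    ∑ l ∈ range (m + 1), Gc g (k + 1) l α β γ δ
      = max (Sig g k α β) (Sig g m γ δ) - max (Sig g (k + 1) α β) (Sig g m γ δ) := by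
  have telescope : ∀ m ≤ γ, ∑ l ∈ range (m + 1), Gc g (k + 1) l α β γ δ
      = Sig g k α β - min (Sig g k α β) (max (Sig g (k + 1) α β) (Sig g m γ δ)) := by
    intro m hm
    induction m with
    | zero => rw [sum_range_one, Gc_succ_zero hk]
    | succ m ih =>
      rw [sum_range_succ, ih (by omega), Gc_succ_succ hg hk (by omega)]
      ring
  rw [telescope m hm, Sig_eq_add_Sig_succ hk, add_sub_clamp_eq_max_sub_max (hg _ _ _)]

lemma sum_Icc_sum_range_Gc (hg : ∀ k α β, 0 ≤ g k α β) (α β γ δ j : ℕ) :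
    ∑ k ∈ Icc (j + 1) α, ∑ l ∈ range (min j γ + 1), Gc g k l α β γ δ
      = max (Sig g j α β) (Sig g j γ δ) - Sig g j γ δ := by
  rcases le_or_gt α j with hj | hj
  · rw [Icc_eq_empty (by omega), sum_empty, Sig_of_le hj,
      max_eq_right (Sig_nonneg hg _ _ _), sub_self]
  rw [← Ico_add_one_right_eq_Icc, ← sum_Ico_add',
    sum_congr rfl fun k hk => sum_range_Gc_succ hg (mem_Ico.1 hk).2 (min_le_right j γ) β δ]
  rw [Sig_min_self_right, sum_Ico_eq_sum_range]
  refine (sum_range_sub' (fun i => max (Sig g (j + i) α β) (Sig g j γ δ)) _).trans ?_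
  rw [add_zero, Sig_of_le (k := j + (α - j)) (by omega), max_eq_right (Sig_nonneg hg _ _ _)]

lemma sum_abs_sub_mul_Gc_eq (hg : ∀ k α β, 0 ≤ g k α β) (α β γ δ : ℕ) :
    ∑ k ∈ range (α + 1), ∑ l ∈ range (γ + 1), |(k : ℝ) - l| * Gc g k l α β γ δ
      = ∑ j ∈ range (max α γ), |Sig g j α β - Sig g j γ δ| := by
  have split (k l : ℕ) : |(k : ℝ) - l| * Gc g k l α β γ δ
      = (k - l) • Gc g k l α β γ δ + (l - k) • Gc g l k γ δ α β := by
    rw [← Gc_comm, nsmul_eq_mul, nsmul_eq_mul, ← add_mul]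
    rcases le_total k l with h | h
    · rw [Nat.sub_eq_zero_of_le h, abs_of_nonpos (by simpa using h), Nat.cast_sub h]
      ring
    · rw [Nat.sub_eq_zero_of_le h, abs_of_nonneg (by simpa using h), Nat.cast_sub h]
      ring
  simp only [split, sum_add_distrib]
  rw [sum_comm (f := fun k l => (l - k) • Gc g l k γ δ α β),
    sum_range_sum_range_tsub_smul (le_max_left α γ),
    sum_range_sum_range_tsub_smul (le_max_right α γ), ← sum_add_distrib]
  refine sum_congr rfl fun j _ => ?_
  rw [sum_Icc_sum_range_Gc hg, sum_Icc_sum_range_Gc hg]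
  rcases le_total (Sig g j α β) (Sig g j γ δ) with h | h
  · rw [max_eq_right h, max_eq_left h, abs_of_nonpos (sub_nonpos.2 h)]
    ring
  · rw [max_eq_left h, max_eq_right h, abs_of_nonneg (sub_nonneg.2 h)]
    ring

lemma abs_Sig_sub_Sig_le (hgz : ∀ k α β, α < k → g k α β = 0) {α γ N : ℕ} (hα : α ≤ N)
    (hγ : γ ≤ N) (j β δ : ℕ) :
    |Sig g j α β - Sig g j γ δ| ≤ ∑ i ∈ Icc (j + 1) N, |g i α β - g i γ δ| := by
  have extend {α : ℕ} (hα : α ≤ N) (β : ℕ) : Sig g j α β = ∑ i ∈ Icc (j + 1) N, g i α β :=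
    sum_subset (Icc_subset_Icc_right hα) fun i hi hi' =>
      hgz i α β (by simp only [mem_Icc] at hi hi'; omega)
  rw [extend hα, extend hγ, ← sum_sub_distrib]
  exact abs_sum_le_sum_abs _ _

lemma sum_abs_sub_mul_Gc_le (hg : ∀ k α β, 0 ≤ g k α β) (hgz : ∀ k α β, α < k → g k α β = 0)
    (α β γ δ : ℕ) :
    ∑ k ∈ range (α + 1), ∑ l ∈ range (γ + 1), |(k : ℝ) - l| * Gc g k l α β γ δ
      ≤ ∑ i ∈ Icc 1 (max α γ), (i : ℝ) * |g i α β - g i γ δ| := by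
  rw [sum_abs_sub_mul_Gc_eq hg]
  calc ∑ j ∈ range (max α γ), |Sig g j α β - Sig g j γ δ|
      ≤ ∑ j ∈ range (max α γ), ∑ i ∈ Icc (j + 1) (max α γ), |g i α β - g i γ δ| :=
        sum_le_sum fun j _ => abs_Sig_sub_Sig_le hgz (le_max_left α γ) (le_max_right α γ) j β δ
    _ = ∑ i ∈ Icc 1 (max α γ), (i : ℝ) * |g i α β - g i γ δ| := by
        simp only [sum_range_sum_Icc_eq_sum_Icc_smul, nsmul_eq_mul]

theorem stmt12_general
    (g : ℕ → ℕ → ℕ → ℝ)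
    (hgnn : ∀ k α β : ℕ, 0 ≤ g k α β)
    (hgz : ∀ k α β : ℕ, α < k ∨ α = 0 → g k α β = 0) :
    (∀ α β γ δ : ℕ,
      ∑ k ∈ Finset.range (α + 1), ∑ l ∈ Finset.range (γ + 1),
          |(k : ℝ) - (l : ℝ)| * Gc g k l α β γ δ
        ≤ 2 * ∑ i ∈ Finset.Icc 1 (max α γ), (i : ℝ) * |g i α β - g i γ δ|) ∧
    (∀ C : ℝ, 0 < C →
      (∀ α β γ δ : ℕ,
        ∑ k ∈ Finset.Icc 1 (max α γ), (k : ℝ) * |g k α β - g k γ δ|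
          ≤ C * (|(α : ℝ) - (γ : ℝ)| + |(β : ℝ) - (δ : ℝ)|)) →
      ∀ α β γ δ : ℕ,
        ∑ k ∈ Finset.range (α + 1), ∑ l ∈ Finset.range (γ + 1),
            |(k : ℝ) - (l : ℝ)| * Gc g k l α β γ δ
          ≤ 2 * C * (|(α : ℝ) - (γ : ℝ)| + |(β : ℝ) - (δ : ℝ)|)) := by
  have bound (α β γ δ : ℕ) :
      ∑ k ∈ range (α + 1), ∑ l ∈ range (γ + 1), |(k : ℝ) - l| * Gc g k l α β γ δ
        ≤ 2 * ∑ i ∈ Icc 1 (max α γ), (i : ℝ) * |g i α β - g i γ δ| :=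
    (sum_abs_sub_mul_Gc_le hgnn (fun k α β h => hgz k α β (Or.inl h)) α β γ δ).trans <|
      le_mul_of_one_le_left (sum_nonneg fun i _ => by positivity) one_le_two
  refine ⟨bound, fun C _ hC α β γ δ => ?_⟩
  rw [mul_assoc]
  exact (bound α β γ δ).trans (mul_le_mul_of_nonneg_left (hC α β γ δ) zero_le_two)

/-- key estimate on the coupling rates. -/
theorem stmt12
    (g : ℕ → ℕ → ℕ → ℝ)
    (hgnn : ∀ k α β : ℕ, 0 ≤ g k α β)
    (hg0 : ∀ α β : ℕ, g 0 α β = 0)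
    (hgz : ∀ k α β : ℕ, α < k ∨ α = 0 → g k α β = 0) :
    (∀ α β γ δ : ℕ,
      ∑ k ∈ Finset.range (α + 1), ∑ l ∈ Finset.range (γ + 1),
          |(k : ℝ) - (l : ℝ)| * Gc g k l α β γ δ
        ≤ 2 * ∑ i ∈ Finset.Icc 1 (max α γ), (i : ℝ) * |g i α β - g i γ δ|) ∧
    (∀ C : ℝ, 0 < C →
      (∀ α β γ δ : ℕ,
        ∑ k ∈ Finset.Icc 1 (max α γ), (k : ℝ) * |g k α β - g k γ δ|
          ≤ C * (|(α : ℝ) - (γ : ℝ)| + |(β : ℝ) - (δ : ℝ)|)) →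
      ∀ α β γ δ : ℕ,
        ∑ k ∈ Finset.range (α + 1), ∑ l ∈ Finset.range (γ + 1),
            |(k : ℝ) - (l : ℝ)| * Gc g k l α β γ δ
          ≤ 2 * C * (|(α : ℝ) - (γ : ℝ)| + |(β : ℝ) - (δ : ℝ)|)) :=
  stmt12_general g hgnn hgz
end

section
/- Let X be a countable set, p : X × X → [0,∞) with Σ_{y∈X} p(x,y) = 1 for every x and m_p := sup_{y∈X} Σ_{x∈X} p(x,y) < ∞, and a : X → (0,∞) satisfying Σ_{y∈X} p(x,y)·a_y + Σ_{y∈X} a_y·p(y,x) ≤ M·a_x for all x ∈ X and some constant M. Let X_n ⊆ X be a finite subset. Let (g^k_{α,β}) be a family of mass-migration rates satisfying condition (C1) with constant C. For configurations η : X_n → ℕ set ‖η‖ := Σ_{x∈X_n} η(x)·a_x, and let f : ℕ^{X_n} → ℝ be Lipschitz with constant L_f, i.e. |f(η) − f(ζ)| ≤ L_f·Σ_{x∈X_n} |η(x) − ζ(x)|·a_x for all η, ζ. Define L_n f(η) := Σ_{x≠y ∈ X_n} Σ_{k=1}^{η(x)} p(x,y)·g^k_{η(x),η(y)}·(f(S^k_{x,y}η)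 − f(η)). Then |L_n f(η)| ≤ L_f·C·(1 + m_p + M)·‖η‖ for every η : X_n → ℕ. -/
/-- bound on the finite-volume generator of the mass
migration process, Lemma 7.2 of the paper. -/
theorem stmt13
    {X : Type*} [Countable X] [DecidableEq X]
    (p : X → X → ℝ) (hpnn : ∀ x y : X, 0 ≤ p x y)
    (hrow : ∀ x : X, HasSum (fun y => p x y) 1)
    (mp : ℝ) (hcolsum : ∀ y : X, Summable (fun x => p x y))
    (hmp : ∀ y : X, (∑' x, p x y) ≤ mp)
    (a : X → ℝ) (hapos : ∀ x : X, 0 < a x)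
    (M : ℝ)
    (ha1 : ∀ x : X, Summable (fun y => p x y * a y))
    (ha2 : ∀ x : X, Summable (fun y => a y * p y x))
    (hM : ∀ x : X, (∑' y, p x y * a y) + (∑' y, a y * p y x) ≤ M * a x)
    (g : ℕ → ℕ → ℕ → ℝ)
    (hgnn : ∀ k α β : ℕ, 0 ≤ g k α β)
    (hg0 : ∀ α β : ℕ, g 0 α β = 0)
    (hgz : ∀ k α β : ℕ, α < k ∨ α = 0 → g k α β = 0)
    (C : ℝ) (hC : 0 < C)
    (hC1 : ∀ α β : ℕ, 0 < α →
      ∑ k ∈ Finset.Icc 1 α, (k : ℝ) * g k α β ≤ C * ((α : ℝ) + (β : ℝ)))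
    (Xn : Finset X)
    (f : (X → ℕ) → ℝ) (Lf : ℝ) (hLf : 0 ≤ Lf)
    (hf : ∀ η ζ : X → ℕ,
      |f η - f ζ| ≤ Lf * ∑ x ∈ Xn, |(η x : ℝ) - (ζ x : ℝ)| * a x)
    (η : X → ℕ) :
    |∑ x ∈ Xn, ∑ y ∈ Xn \ {x}, ∑ k ∈ Finset.Icc 1 (η x),
        p x y * g k (η x) (η y) *
          (f (fun z => if z = x then η x - k else if z = y then η y + k else η z)
            - f η)|
      ≤ Lf * C * (1 + mp + M) * ∑ x ∈ Xn, (η x : ℝ) * a x := by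
  classical
  set S : ℝ := ∑ x ∈ Xn, (η x : ℝ) * a x with hSdef
  have hnn : ∀ x y : X, 0 ≤ p x y * (((η x : ℝ) + (η y : ℝ)) * (a x + a y)) := fun x y =>
    mul_nonneg (hpnn x y) (mul_nonneg (add_nonneg (Nat.cast_nonneg _) (Nat.cast_nonneg _))
      (add_nonneg (hapos x).le (hapos y).le))
  -- per-pair bound
  have key : ∀ x ∈ Xn, ∀ y ∈ Xn \ {x},
      ∑ k ∈ Finset.Icc 1 (η x),
        |p x y * g k (η x) (η y) *
          (f (fun z => if z = x then η x - k else if z = y then η y + k else η z) - f η)|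
        ≤ (Lf * C) * (p x y * (((η x : ℝ) + (η y : ℝ)) * (a x + a y))) := by
    intro x hx y hy
    obtain ⟨hyXn, hyx⟩ : y ∈ Xn ∧ y ≠ x := by
      simpa [Finset.mem_sdiff] using hy
    have hterm : ∀ k ∈ Finset.Icc 1 (η x),
        |p x y * g k (η x) (η y) *
          (f (fun z => if z = x then η x - k else if z = y then η y + k else η z) - f η)|
          ≤ (Lf * (a x + a y) * p x y) * ((k : ℝ) * g k (η x) (η y)) := by
      intro k hk
      obtain ⟨hk1, hk2⟩ := Finset.mem_Icc.mp hk
      set ζ : X → ℕ := fun z => if z = x then η x - k else if z = y then η y + k else η z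
        with hζ
      have hζx : ζ x = η x - k := by simp [hζ]
      have hζy : ζ y = η y + k := by simp [hζ, hyx]
      have hζo : ∀ z, z ≠ x → z ≠ y → ζ z = η z := fun z h1 h2 => by simp [hζ, h1, h2]
      have hpt : ∀ z ∈ Xn, |(ζ z : ℝ) - (η z : ℝ)| * a z
          = (if z = x then (k : ℝ) * a x else 0) + (if z = y then (k : ℝ) * a y else 0) := by
        intro z _
        rcases eq_or_ne z x with hzx | hzx
        · rw [hzx, hζx, if_pos rfl, if_neg (fun h => hyx h.symm), Nat.cast_sub hk2]
          rw [show (η x : ℝ) - (k : ℝ) - (η x : ℝ) = -(k : ℝ) from by ring, abs_neg,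
            abs_of_nonneg (by positivity : (0:ℝ) ≤ (k : ℝ))]
          ring
        · rcases eq_or_ne z y with hzy | hzy
          · rw [hzy, hζy, if_neg hyx, if_pos rfl, Nat.cast_add]
            rw [show (η y : ℝ) + (k : ℝ) - (η y : ℝ) = (k : ℝ) from by ring,
              abs_of_nonneg (by positivity : (0:ℝ) ≤ (k : ℝ))]
            ring
          · rw [hζo z hzx hzy, if_neg hzx, if_neg hzy, sub_self, abs_zero, zero_mul]
            ring
      have hsum : ∑ z ∈ Xn, |(ζ z : ℝ) - (η z : ℝ)| * a z = (k : ℝ) * (a x + a y) := by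
        rw [Finset.sum_congr rfl hpt, Finset.sum_add_distrib,
          Finset.sum_ite_eq' Xn x (fun _ => (k : ℝ) * a x),
          Finset.sum_ite_eq' Xn y (fun _ => (k : ℝ) * a y), if_pos hx, if_pos hyXn]
        ring
      have hdiff : |f ζ - f η| ≤ Lf * ((k : ℝ) * (a x + a y)) := by
        calc |f ζ - f η| ≤ Lf * ∑ z ∈ Xn, |(ζ z : ℝ) - (η z : ℝ)| * a z := hf ζ η
          _ = Lf * ((k : ℝ) * (a x + a y)) := by rw [hsum]
      calc |p x y * g k (η x) (η y) * (f ζ - f η)|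
          = p x y * g k (η x) (η y) * |f ζ - f η| := by
            rw [abs_mul, abs_of_nonneg (mul_nonneg (hpnn x y) (hgnn k _ _))]
        _ ≤ p x y * g k (η x) (η y) * (Lf * ((k : ℝ) * (a x + a y))) :=
            mul_le_mul_of_nonneg_left hdiff (mul_nonneg (hpnn x y) (hgnn k _ _))
        _ = (Lf * (a x + a y) * p x y) * ((k : ℝ) * g k (η x) (η y)) := by ring
    have hfac : 0 ≤ Lf * (a x + a y) * p x y :=
      mul_nonneg (mul_nonneg hLf (add_nonneg (hapos x).le (hapos y).le)) (hpnn x y)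
    calc ∑ k ∈ Finset.Icc 1 (η x),
          |p x y * g k (η x) (η y) *
            (f (fun z => if z = x then η x - k else if z = y then η y + k else η z) - f η)|
        ≤ ∑ k ∈ Finset.Icc 1 (η x), (Lf * (a x + a y) * p x y) * ((k : ℝ) * g k (η x) (η y)) :=
          Finset.sum_le_sum hterm
      _ = (Lf * (a x + a y) * p x y) * ∑ k ∈ Finset.Icc 1 (η x), (k : ℝ) * g k (η x) (η y) := by
          rw [Finset.mul_sum]
      _ ≤ (Lf * (a x + a y) * p x y) * (C * ((η x : ℝ) + (η y : ℝ))) := by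
          apply mul_le_mul_of_nonneg_left _ hfac
          rcases Nat.eq_zero_or_pos (η x) with h0 | hpos
          · rw [h0, Finset.Icc_eq_empty (by omega : ¬(1:ℕ) ≤ 0), Finset.sum_empty]
            have : (0:ℝ) ≤ ((0:ℕ) : ℝ) + (η y : ℝ) := by positivity
            exact mul_nonneg hC.le this
          · exact hC1 _ _ hpos
      _ = (Lf * C) * (p x y * (((η x : ℝ) + (η y : ℝ)) * (a x + a y))) := by ring
  -- bounds on the three double sums
  have hA : ∑ x ∈ Xn, ∑ y ∈ Xn, p x y * ((η x : ℝ) * a x) ≤ S := by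
    have h : ∀ x ∈ Xn, ∑ y ∈ Xn, p x y * ((η x : ℝ) * a x) ≤ (η x : ℝ) * a x := by
      intro x hx
      rw [← Finset.sum_mul]
      have h2 : (∑ y ∈ Xn, p x y) ≤ 1 := by
        have h := Summable.sum_le_tsum Xn (fun y _ => hpnn x y) (hrow x).summable
        rwa [(hrow x).tsum_eq] at h
      calc (∑ y ∈ Xn, p x y) * ((η x : ℝ) * a x) ≤ 1 * ((η x : ℝ) * a x) :=
          mul_le_mul_of_nonneg_right h2 (mul_nonneg (Nat.cast_nonneg _) (hapos x).le)
        _ = (η x : ℝ) * a x := one_mul _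
    exact Finset.sum_le_sum h
  have hB : (∑ x ∈ Xn, ∑ y ∈ Xn, (η x : ℝ) * (p x y * a y))
      + (∑ x ∈ Xn, ∑ y ∈ Xn, (η y : ℝ) * (a x * p x y)) ≤ M * S := by
    have hswap : (∑ x ∈ Xn, ∑ y ∈ Xn, (η y : ℝ) * (a x * p x y))
        = ∑ x ∈ Xn, ∑ y ∈ Xn, (η x : ℝ) * (a y * p y x) := Finset.sum_comm
    rw [hswap, ← Finset.sum_add_distrib]
    have h : ∀ x ∈ Xn, (∑ y ∈ Xn, (η x : ℝ) * (p x y * a y))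
        + (∑ y ∈ Xn, (η x : ℝ) * (a y * p y x)) ≤ M * ((η x : ℝ) * a x) := by
      intro x hx
      rw [← Finset.mul_sum, ← Finset.mul_sum, ← mul_add]
      have h1 : (∑ y ∈ Xn, p x y * a y) ≤ ∑' y, p x y * a y :=
        Summable.sum_le_tsum Xn (fun y _ => mul_nonneg (hpnn x y) (hapos y).le) (ha1 x)
      have h2 : (∑ y ∈ Xn, a y * p y x) ≤ ∑' y, a y * p y x :=
        Summable.sum_le_tsum Xn (fun y _ => mul_nonneg (hapos y).le (hpnn y x)) (ha2 x)
      calc (η x : ℝ) * ((∑ y ∈ Xn, p x y * a y) + ∑ y ∈ Xn, a y * p y x)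
          ≤ (η x : ℝ) * (M * a x) := by
            apply mul_le_mul_of_nonneg_left _ (Nat.cast_nonneg _)
            exact le_trans (add_le_add h1 h2) (hM x)
        _ = M * ((η x : ℝ) * a x) := by ring
    calc ∑ x ∈ Xn, ((∑ y ∈ Xn, (η x : ℝ) * (p x y * a y))
            + ∑ y ∈ Xn, (η x : ℝ) * (a y * p y x))
        ≤ ∑ x ∈ Xn, M * ((η x : ℝ) * a x) := Finset.sum_le_sum h
      _ = M * S := by rw [← Finset.mul_sum]
  have hD : ∑ x ∈ Xn, ∑ y ∈ Xn, p x y * ((η y : ℝ) * a y) ≤ mp * S := by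
    have hswap : (∑ x ∈ Xn, ∑ y ∈ Xn, p x y * ((η y : ℝ) * a y))
        = ∑ x ∈ Xn, ∑ y ∈ Xn, p y x * ((η x : ℝ) * a x) := Finset.sum_comm
    rw [hswap]
    have h : ∀ x ∈ Xn, ∑ y ∈ Xn, p y x * ((η x : ℝ) * a x) ≤ mp * ((η x : ℝ) * a x) := by
      intro x hx
      rw [← Finset.sum_mul]
      apply mul_le_mul_of_nonneg_right _ (mul_nonneg (Nat.cast_nonneg _) (hapos x).le)
      exact le_trans (Summable.sum_le_tsum Xn (fun y _ => hpnn y x) (hcolsum x)) (hmp x)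
    calc ∑ x ∈ Xn, ∑ y ∈ Xn, p y x * ((η x : ℝ) * a x)
        ≤ ∑ x ∈ Xn, mp * ((η x : ℝ) * a x) := Finset.sum_le_sum h
      _ = mp * S := by rw [← Finset.mul_sum]
  have main : ∑ x ∈ Xn, ∑ y ∈ Xn, p x y * (((η x : ℝ) + (η y : ℝ)) * (a x + a y))
      ≤ (1 + mp + M) * S := by
    calc ∑ x ∈ Xn, ∑ y ∈ Xn, p x y * (((η x : ℝ) + (η y : ℝ)) * (a x + a y))
        = ∑ x ∈ Xn, ∑ y ∈ Xn,
            (p x y * ((η x : ℝ) * a x)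
              + ((η x : ℝ) * (p x y * a y) + (η y : ℝ) * (a x * p x y))
              + p x y * ((η y : ℝ) * a y)) :=
          Finset.sum_congr rfl fun x _ => Finset.sum_congr rfl fun y _ => by ring
      _ = (∑ x ∈ Xn, ∑ y ∈ Xn, p x y * ((η x : ℝ) * a x))
          + ((∑ x ∈ Xn, ∑ y ∈ Xn, (η x : ℝ) * (p x y * a y))
             + ∑ x ∈ Xn, ∑ y ∈ Xn, (η y : ℝ) * (a x * p x y))
          + ∑ x ∈ Xn, ∑ y ∈ Xn, p x y * ((η y : ℝ) * a y) := by
          simp only [Finset.sum_add_distrib]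
      _ ≤ S + M * S + mp * S := add_le_add (add_le_add hA hB) hD
      _ = (1 + mp + M) * S := by ring
  calc |∑ x ∈ Xn, ∑ y ∈ Xn \ {x}, ∑ k ∈ Finset.Icc 1 (η x),
        p x y * g k (η x) (η y) *
          (f (fun z => if z = x then η x - k else if z = y then η y + k else η z) - f η)|
      ≤ ∑ x ∈ Xn, |∑ y ∈ Xn \ {x}, ∑ k ∈ Finset.Icc 1 (η x),
          p x y * g k (η x) (η y) *
            (f (fun z => if z = x then η x - k else if z = y then η y + k else η z) - f η)| :=
        Finset.abs_sum_le_sum_abs _ _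
    _ ≤ ∑ x ∈ Xn, ∑ y ∈ Xn \ {x}, |∑ k ∈ Finset.Icc 1 (η x),
          p x y * g k (η x) (η y) *
            (f (fun z => if z = x then η x - k else if z = y then η y + k else η z) - f η)| :=
        Finset.sum_le_sum fun x _ => Finset.abs_sum_le_sum_abs _ _
    _ ≤ ∑ x ∈ Xn, ∑ y ∈ Xn \ {x}, ∑ k ∈ Finset.Icc 1 (η x),
          |p x y * g k (η x) (η y) *
            (f (fun z => if z = x then η x - k else if z = y then η y + k else η z) - f η)| :=
        Finset.sum_le_sum fun x _ => Finset.sum_le_sum fun y _ => Finset.abs_sum_le_sum_abs _ _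
    _ ≤ ∑ x ∈ Xn, ∑ y ∈ Xn \ {x},
          (Lf * C) * (p x y * (((η x : ℝ) + (η y : ℝ)) * (a x + a y))) :=
        Finset.sum_le_sum fun x hx => Finset.sum_le_sum fun y hy => key x hx y hy
    _ ≤ ∑ x ∈ Xn, ∑ y ∈ Xn,
          (Lf * C) * (p x y * (((η x : ℝ) + (η y : ℝ)) * (a x + a y))) :=
        Finset.sum_le_sum fun x _ => Finset.sum_le_sum_of_subset_of_nonneg
          Finset.sdiff_subset (fun y _ _ => mul_nonneg (mul_nonneg hLf hC.le) (hnn x y))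
    _ = (Lf * C) * ∑ x ∈ Xn, ∑ y ∈ Xn, p x y * (((η x : ℝ) + (η y : ℝ)) * (a x + a y)) := by
        simp only [← Finset.mul_sum]
    _ ≤ (Lf * C) * ((1 + mp + M) * S) :=
        mul_le_mul_of_nonneg_left main (mul_nonneg hLf hC.le)
    _ = Lf * C * (1 + mp + M) * S := by ring
end

section
/- Let π : ℕ → (0,∞) (with the convention π(i) := 0 for negative integers i), let h : ℕ → [0,∞) with h(0) = 0, and suppose r(n) := π(n)/π(n+1) is nonincreasing in n ≥ 1. Then condition (AG) [for all α ≥ 1 and all 1 ≤ m ≤ α: 0 ≤ Σ_{j=0}^{m−1} π(j)·(h(α−j)/π(α) − h(α+1−j)/π(α+1)) ≤ π(m)·h(α+1−m)/π(α+1)] is equivalent to the conjunction of (A1) [h(α+1)/π(α+1) ≤ h(α)/π(α) for all α ≥ 1] and (A2) [Σ_{k=1}^{α} h(k)·(π(α−k)/π(α) − π(α−k+1)/π(α+1)) ≤ π(0)·h(α+1)/π(α+1) for all α ≥ 1]. If moreover h(α) > 0 for all α ≥ 1, then (A1) and (A2) together imply (A3) [(1/π(α))·Σ_{i=1}^{α−1}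 π(i)·π(α−i) ≤ (1/π(α+1))·Σ_{i=1}^{α} π(i)·π(α+1−i) for all α ≥ 2]. If in addition h(α) = h₀·π(α) for all α ≥ 1 for some constant h₀ > 0, then (AG) is equivalent to (A3). -/
open Finset

private lemma split_mul (p F G : ℕ → ℝ) (c d : ℝ) (s : Finset ℕ) :
    ∑ k ∈ s, p k * (F k / c - G k / d)
      = (∑ k ∈ s, p k * F k) / c - (∑ k ∈ s, p k * G k) / d := by
  rw [Finset.sum_div, Finset.sum_div, ← Finset.sum_sub_distrib]
  exact Finset.sum_congr rfl fun k _ => by ring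

private lemma reindex (p q : ℕ → ℝ) (n : ℕ) :
    ∑ j ∈ Finset.range n, p j * q (n - j) = ∑ k ∈ Finset.Icc 1 n, q k * p (n - k) := by
  have r1 : ∑ j ∈ Finset.range n, p (n - 1 - j) * q (n - (n - 1 - j))
      = ∑ j ∈ Finset.range n, p j * q (n - j) :=
    Finset.sum_range_reflect (fun i => p i * q (n - i)) n
  have r4 : ∑ k ∈ Finset.Icc 1 n, q k * p (n - k)
      = ∑ j ∈ Finset.range (n + 1 - 1), q (1 + j) * p (n - (1 + j)) := by
    rw [← Finset.Ico_add_one_right_eq_Icc]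
    exact Finset.sum_Ico_eq_sum_range (fun k => q k * p (n - k)) 1 (n + 1)
  simp only [Nat.add_sub_cancel] at r4
  rw [← r1, r4]
  refine Finset.sum_congr rfl fun j hj => ?_
  have hjn : j < n := Finset.mem_range.mp hj
  have e1 : n - (n - 1 - j) = 1 + j := by omega
  have e2 : n - 1 - j = n - (1 + j) := by omega
  rw [e1, e2, mul_comm]

private lemma rchain (π : ℕ → ℝ)
    (hr : ∀ n : ℕ, 1 ≤ n → π (n + 1) / π (n + 2) ≤ π n / π (n + 1)) :
    ∀ a b : ℕ, 1 ≤ a → a ≤ b → π b / π (b + 1) ≤ π a / π (a + 1) := by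
  intro a b
  induction b with
  | zero => intro h1 h2; exfalso; omega
  | succ n ih =>
    intro h1 h2
    rcases Nat.lt_or_ge a (n + 1) with hlt | hge
    · exact (hr n (by omega)).trans (ih h1 (by omega))
    · have : a = n + 1 := by omega
      subst this; exact le_rfl

private lemma cross (π : ℕ → ℝ) (hπ : ∀ n : ℕ, 0 < π n)
    (hr : ∀ n : ℕ, 1 ≤ n → π (n + 1) / π (n + 2) ≤ π n / π (n + 1))
    {m α : ℕ} (hm : 1 ≤ m) (hmα : m ≤ α) :
    π (m + 1) / π (α + 1) ≤ π m / π α := by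
  have h1 := rchain π hr m α hm hmα
  rw [div_le_div_iff₀ (hπ _) (hπ _)] at h1 ⊢
  linarith

private lemma a1chain (π h : ℕ → ℝ)
    (A1 : ∀ α : ℕ, 1 ≤ α → h (α + 1) / π (α + 1) ≤ h α / π α) :
    ∀ k α : ℕ, 1 ≤ k → k ≤ α → h α / π α ≤ h k / π k := by
  intro k α
  induction α with
  | zero => intro h1 h2; exfalso; omega
  | succ n ih =>
    intro h1 h2
    rcases Nat.lt_or_ge k (n + 1) with hlt | hge
    · exact (A1 n (by omega)).trans (ih h1 (by omega))
    · have : k = n + 1 := by omega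
      subst this; exact le_rfl

private lemma termwise (π h : ℕ → ℝ) (hπ : ∀ n : ℕ, 0 < π n) (hhnn : ∀ n : ℕ, 0 ≤ h n)
    (hr : ∀ n : ℕ, 1 ≤ n → π (n + 1) / π (n + 2) ≤ π n / π (n + 1))
    (A1 : ∀ α : ℕ, 1 ≤ α → h (α + 1) / π (α + 1) ≤ h α / π α)
    {n : ℕ} (j : ℕ) (hn : 1 ≤ n) :
    h (n + 1) / π (n + j + 1) ≤ h n / π (n + j) := by
  have h1 : h (n + 1) / π (n + 1) ≤ h n / π n := A1 n hn
  have h2 : π (n + 1) / π (n + j + 1) ≤ π n / π (n + j) :=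
    cross π hπ hr hn (Nat.le_add_right n j)
  have hb2 : (0:ℝ) ≤ π (n + 1) / π (n + j + 1) := div_nonneg (hπ _).le (hπ _).le
  have hb3 : (0:ℝ) ≤ h n / π n := div_nonneg (hhnn _) (hπ _).le
  have hmul := mul_le_mul h1 h2 hb2 hb3
  have n1 : π (n + 1) ≠ 0 := (hπ _).ne'
  have n2 : π n ≠ 0 := (hπ _).ne'
  have n3 : π (n + j + 1) ≠ 0 := (hπ _).ne'
  have n4 : π (n + j) ≠ 0 := (hπ _).ne'
  have e1 : h (n + 1) / π (n + 1) * (π (n + 1) / π (n + j + 1)) = h (n + 1) / π (n + j + 1) := by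
    field_simp
  have e2 : h n / π n * (π n / π (n + j)) = h n / π (n + j) := by
    field_simp
  rw [e1, e2] at hmul
  exact hmul

private lemma Bident (π h : ℕ → ℝ) (α : ℕ) (hα : 1 ≤ α) :
    ∑ j ∈ Finset.range α, π j * h (α + 1 - j)
      = (∑ k ∈ Finset.Icc 1 α, h k * π (α - k + 1)) + π 0 * h (α + 1) - π α * h 1 := by
  have s1 : ∑ j ∈ Finset.range (α + 1), π j * h (α + 1 - j)
      = (∑ j ∈ Finset.range α, π j * h (α + 1 - j)) + π α * h (α + 1 - α) :=
    Finset.sum_range_succ _ _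
  rw [show α + 1 - α = 1 from by omega] at s1
  have s2 : ∑ j ∈ Finset.range (α + 1), π j * h (α + 1 - j)
      = ∑ k ∈ Finset.Icc 1 (α + 1), h k * π (α + 1 - k) := reindex π h (α + 1)
  have hIns : Finset.Icc 1 (α + 1) = insert (α + 1) (Finset.Icc 1 α) := by
    ext x; simp only [Finset.mem_Icc, Finset.mem_insert]; omega
  have hnot : (α + 1) ∉ Finset.Icc 1 α := by simp [Finset.mem_Icc]
  have s3 : ∑ k ∈ Finset.Icc 1 (α + 1), h k * π (α + 1 - k)
      = h (α + 1) * π 0 + ∑ k ∈ Finset.Icc 1 α, h k * π (α + 1 - k) := by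
    rw [hIns, Finset.sum_insert hnot, show α + 1 - (α + 1) = 0 from by omega]
  have s4 : ∑ k ∈ Finset.Icc 1 α, h k * π (α + 1 - k)
      = ∑ k ∈ Finset.Icc 1 α, h k * π (α - k + 1) :=
    Finset.sum_congr rfl fun k hk => by
      have := Finset.mem_Icc.mp hk
      rw [show α + 1 - k = α - k + 1 from by omega]
  rw [s2, s3, s4] at s1
  linarith

private lemma Tiff (π h : ℕ → ℝ) (hπ : ∀ n : ℕ, 0 < π n) {α : ℕ} (hα : 1 ≤ α) :
    ((∑ j ∈ Finset.range α, π j * (h (α - j) / π α - h (α + 1 - j) / π (α + 1)))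
        ≤ π α * h 1 / π (α + 1))
    ↔ ((∑ k ∈ Finset.Icc 1 α, h k * (π (α - k) / π α - π (α - k + 1) / π (α + 1)))
        ≤ π 0 * h (α + 1) / π (α + 1)) := by
  have e1 : ∑ j ∈ Finset.range α, π j * (h (α - j) / π α - h (α + 1 - j) / π (α + 1))
      = (∑ j ∈ Finset.range α, π j * h (α - j)) / π α
        - (∑ j ∈ Finset.range α, π j * h (α + 1 - j)) / π (α + 1) :=
    split_mul π (fun j => h (α - j)) (fun j => h (α + 1 - j)) (π α) (π (α + 1)) (Finset.range α)
  have e2 : ∑ k ∈ Finset.Icc 1 α, h k * (π (α - k) / π α - π (α - k + 1) / π (α + 1))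
      = (∑ k ∈ Finset.Icc 1 α, h k * π (α - k)) / π α
        - (∑ k ∈ Finset.Icc 1 α, h k * π (α - k + 1)) / π (α + 1) :=
    split_mul h (fun k => π (α - k)) (fun k => π (α - k + 1)) (π α) (π (α + 1)) (Finset.Icc 1 α)
  have hA : ∑ j ∈ Finset.range α, π j * h (α - j) = ∑ k ∈ Finset.Icc 1 α, h k * π (α - k) :=
    reindex π h α
  have hB := Bident π h α hα
  rw [e1, e2, hA, hB]
  have dd : ((∑ k ∈ Finset.Icc 1 α, h k * π (α - k + 1)) + π 0 * h (α + 1) - π α * h 1) / π (α + 1)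
      = (∑ k ∈ Finset.Icc 1 α, h k * π (α - k + 1)) / π (α + 1)
        + π 0 * h (α + 1) / π (α + 1) - π α * h 1 / π (α + 1) := by ring
  rw [dd]
  constructor <;> intro H <;> linarith

private lemma Tstep (π h : ℕ → ℝ) (hπ : ∀ n : ℕ, 0 < π n) (hhnn : ∀ n : ℕ, 0 ≤ h n)
    (hr : ∀ n : ℕ, 1 ≤ n → π (n + 1) / π (n + 2) ≤ π n / π (n + 1))
    {m α : ℕ} (hm : 1 ≤ m) (hmα : m < α) :
    (∑ j ∈ Finset.range m, π j * (h (α - j) / π α - h (α + 1 - j) / π (α + 1)))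
        - π m * h (α + 1 - m) / π (α + 1)
      ≤ (∑ j ∈ Finset.range (m + 1), π j * (h (α - j) / π α - h (α + 1 - j) / π (α + 1)))
        - π (m + 1) * h (α + 1 - (m + 1)) / π (α + 1) := by
  rw [Finset.sum_range_succ, show α + 1 - (m + 1) = α - m from by omega]
  have key : π (m + 1) / π (α + 1) ≤ π m / π α := cross π hπ hr hm hmα.le
  have key2 : h (α - m) * (π (m + 1) / π (α + 1)) ≤ h (α - m) * (π m / π α) :=
    mul_le_mul_of_nonneg_left key (hhnn _)
  have e1 : π m * (h (α - m) / π α - h (α + 1 - m) / π (α + 1))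
      = h (α - m) * (π m / π α) - π m * h (α + 1 - m) / π (α + 1) := by ring
  have e2 : π (m + 1) * h (α - m) / π (α + 1) = h (α - m) * (π (m + 1) / π (α + 1)) := by ring
  rw [e1, e2]
  linarith

private lemma Tmono (π h : ℕ → ℝ) (hπ : ∀ n : ℕ, 0 < π n) (hhnn : ∀ n : ℕ, 0 ≤ h n)
    (hr : ∀ n : ℕ, 1 ≤ n → π (n + 1) / π (n + 2) ≤ π n / π (n + 1))
    {m α : ℕ} (hm : 1 ≤ m) (hmα : m ≤ α) :
    (∑ j ∈ Finset.range m, π j * (h (α - j) / π α - h (α + 1 - j) / π (α + 1)))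
        - π m * h (α + 1 - m) / π (α + 1)
      ≤ (∑ j ∈ Finset.range α, π j * (h (α - j) / π α - h (α + 1 - j) / π (α + 1)))
        - π α * h 1 / π (α + 1) := by
  suffices H : ∀ d : ℕ, m + d ≤ α →
      (∑ j ∈ Finset.range m, π j * (h (α - j) / π α - h (α + 1 - j) / π (α + 1)))
          - π m * h (α + 1 - m) / π (α + 1)
        ≤ (∑ j ∈ Finset.range (m + d), π j * (h (α - j) / π α - h (α + 1 - j) / π (α + 1)))
          - π (m + d) * h (α + 1 - (m + d)) / π (α + 1) by
    have h2 := H (α - m) (by omega)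
    rw [show m + (α - m) = α from by omega, show α + 1 - α = 1 from by omega] at h2
    exact h2
  intro d
  induction d with
  | zero => intro _; simp
  | succ k ih =>
    intro hk
    refine (ih (by omega)).trans ?_
    have := Tstep π h hπ hhnn hr (show 1 ≤ m + k by omega) (show m + k < α by omega)
    rw [show m + (k + 1) = m + k + 1 from by omega]
    exact this

private lemma iff1 (π h : ℕ → ℝ) (hπ : ∀ n : ℕ, 0 < π n)
    (hhnn : ∀ n : ℕ, 0 ≤ h n)
    (hr : ∀ n : ℕ, 1 ≤ n → π (n + 1) / π (n + 2) ≤ π n / π (n + 1)) :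
    (∀ α m : ℕ, 1 ≤ α → 1 ≤ m → m ≤ α →
        (0 ≤ ∑ j ∈ Finset.range m,
              π j * (h (α - j) / π α - h (α + 1 - j) / π (α + 1)) ∧
          ∑ j ∈ Finset.range m,
              π j * (h (α - j) / π α - h (α + 1 - j) / π (α + 1))
            ≤ π m * h (α + 1 - m) / π (α + 1)))
      ↔ ((∀ α : ℕ, 1 ≤ α → h (α + 1) / π (α + 1) ≤ h α / π α)
        ∧ (∀ α : ℕ, 1 ≤ α →
            ∑ k ∈ Finset.Icc 1 α,
                h k * (π (α - k) / π α - π (α - k + 1) / π (α + 1))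
              ≤ π 0 * h (α + 1) / π (α + 1))) := by
  constructor
  · intro AG
    constructor
    · intro α hα
      have h1 := (AG α 1 hα le_rfl hα).1
      rw [Finset.sum_range_one] at h1
      simp only [Nat.sub_zero] at h1
      nlinarith [hπ 0]
    · intro α hα
      have h2 := (AG α α hα hα le_rfl).2
      rw [show α + 1 - α = 1 from by omega] at h2
      exact (Tiff π h hπ hα).mp h2
  · rintro ⟨A1, A2⟩ α m hα hm hmα
    constructor
    · apply Finset.sum_nonneg
      intro j hj
      have hj' : j < m := Finset.mem_range.mp hj
      obtain ⟨n, hn1, rfl⟩ : ∃ n, 1 ≤ n ∧ α = n + j := ⟨α - j, by omega, by omega⟩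
      rw [show n + j - j = n from by omega, show n + j + 1 - j = n + 1 from by omega]
      have ht := termwise π h hπ hhnn hr A1 j hn1
      have h0 : (0:ℝ) ≤ h n / π (n + j) - h (n + 1) / π (n + j + 1) := by linarith
      exact mul_nonneg (hπ j).le h0
    · have hT := Tmono π h hπ hhnn hr hm hmα
      have hTα : (∑ j ∈ Finset.range α, π j * (h (α - j) / π α - h (α + 1 - j) / π (α + 1)))
          - π α * h 1 / π (α + 1) ≤ 0 := by
        have := (Tiff π h hπ hα).mpr (A2 α hα)
        linarith
      linarith

private lemma C_iff_A3 (π : ℕ → ℝ) (hπ : ∀ n : ℕ, 0 < π n) {α : ℕ} (hα : 2 ≤ α) :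
    ((∑ k ∈ Finset.Icc 1 α, π k * (π (α - k) / π α - π (α - k + 1) / π (α + 1))) ≤ π 0)
    ↔ ((1 / π α) * ∑ i ∈ Finset.Icc 1 (α - 1), π i * π (α - i)
        ≤ (1 / π (α + 1)) * ∑ i ∈ Finset.Icc 1 α, π i * π (α + 1 - i)) := by
  have e1 : ∑ k ∈ Finset.Icc 1 α, π k * (π (α - k) / π α - π (α - k + 1) / π (α + 1))
      = (∑ k ∈ Finset.Icc 1 α, π k * π (α - k)) / π α
        - (∑ k ∈ Finset.Icc 1 α, π k * π (α - k + 1)) / π (α + 1) :=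
    split_mul π (fun k => π (α - k)) (fun k => π (α - k + 1)) (π α) (π (α + 1)) (Finset.Icc 1 α)
  have hIns : Finset.Icc 1 α = insert α (Finset.Icc 1 (α - 1)) := by
    ext x; simp only [Finset.mem_Icc, Finset.mem_insert]; omega
  have hnot : α ∉ Finset.Icc 1 (α - 1) := by simp only [Finset.mem_Icc]; omega
  have s1 : ∑ k ∈ Finset.Icc 1 α, π k * π (α - k)
      = π α * π 0 + ∑ k ∈ Finset.Icc 1 (α - 1), π k * π (α - k) := by
    rw [hIns, Finset.sum_insert hnot, show α - α = 0 from by omega]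
  have s2 : ∑ k ∈ Finset.Icc 1 α, π k * π (α - k + 1)
      = ∑ i ∈ Finset.Icc 1 α, π i * π (α + 1 - i) :=
    Finset.sum_congr rfl fun k hk => by
      have := Finset.mem_Icc.mp hk
      rw [show α - k + 1 = α + 1 - k from by omega]
  rw [e1, s1, s2]
  have hcancel : (π α * π 0 + ∑ k ∈ Finset.Icc 1 (α - 1), π k * π (α - k)) / π α
      = π 0 + (∑ k ∈ Finset.Icc 1 (α - 1), π k * π (α - k)) / π α := by
    rw [add_div, mul_comm, mul_div_assoc, div_self (hπ α).ne', mul_one]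
  rw [hcancel]
  have g1 : (1 / π α) * (∑ i ∈ Finset.Icc 1 (α - 1), π i * π (α - i))
      = (∑ k ∈ Finset.Icc 1 (α - 1), π k * π (α - k)) / π α := by ring
  have g2 : (1 / π (α + 1)) * (∑ i ∈ Finset.Icc 1 α, π i * π (α + 1 - i))
      = (∑ i ∈ Finset.Icc 1 α, π i * π (α + 1 - i)) / π (α + 1) := by ring
  constructor <;> intro H <;> [rw [g1, g2]; skip] <;> linarith [g1, g2]

private lemma lem2 (π h : ℕ → ℝ) (hπ : ∀ n : ℕ, 0 < π n)
    (hr : ∀ n : ℕ, 1 ≤ n → π (n + 1) / π (n + 2) ≤ π n / π (n + 1))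
    (hpos : ∀ α : ℕ, 1 ≤ α → 0 < h α)
    (A1 : ∀ α : ℕ, 1 ≤ α → h (α + 1) / π (α + 1) ≤ h α / π α)
    (A2 : ∀ α : ℕ, 1 ≤ α →
        ∑ k ∈ Finset.Icc 1 α, h k * (π (α - k) / π α - π (α - k + 1) / π (α + 1))
          ≤ π 0 * h (α + 1) / π (α + 1)) :
    ∀ α : ℕ, 2 ≤ α →
      (1 / π α) * ∑ i ∈ Finset.Icc 1 (α - 1), π i * π (α - i)
        ≤ (1 / π (α + 1)) * ∑ i ∈ Finset.Icc 1 α, π i * π (α + 1 - i) := by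
  intro α hα
  rw [← C_iff_A3 π hπ hα]
  have hα1 : 1 ≤ α := by omega
  have hratio : 0 < h α / π α := div_pos (hpos α hα1) (hπ α)
  have hstep1 : ∀ k ∈ Finset.Icc 1 α,
      (h α / π α) * (π k * (π (α - k) / π α - π (α - k + 1) / π (α + 1)))
        ≤ h k * (π (α - k) / π α - π (α - k + 1) / π (α + 1)) := by
    intro k hk
    obtain ⟨hk1, hk2⟩ := Finset.mem_Icc.mp hk
    rcases eq_or_lt_of_le hk2 with heq | hlt
    · subst heq
      have e : h k / π k * π k = h k := div_mul_cancel₀ _ (hπ k).ne'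
      refine le_of_eq ?_
      calc (h k / π k) * (π k * (π (k - k) / π k - π (k - k + 1) / π (k + 1)))
          = (h k / π k * π k) * (π (k - k) / π k - π (k - k + 1) / π (k + 1)) := by ring
        _ = h k * (π (k - k) / π k - π (k - k + 1) / π (k + 1)) := by rw [e]
    · have hc : 0 ≤ π (α - k) / π α - π (α - k + 1) / π (α + 1) := by
        have := cross π hπ hr (show 1 ≤ α - k from by omega) (show α - k ≤ α from by omega)
        linarith
      have h3 := a1chain π h A1 k α hk1 hk2
      have h4 : (h α / π α) * π k ≤ (h k / π k) * π k :=
        mul_le_mul_of_nonneg_right h3 (hπ k).le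
      have h5 : h k / π k * π k = h k := div_mul_cancel₀ _ (hπ k).ne'
      have hhk : (h α / π α) * π k ≤ h k := by linarith
      calc (h α / π α) * (π k * (π (α - k) / π α - π (α - k + 1) / π (α + 1)))
          = ((h α / π α) * π k) * (π (α - k) / π α - π (α - k + 1) / π (α + 1)) := by ring
        _ ≤ h k * (π (α - k) / π α - π (α - k + 1) / π (α + 1)) :=
            mul_le_mul_of_nonneg_right hhk hc
  have hsum := Finset.sum_le_sum hstep1
  rw [← Finset.mul_sum] at hsum
  have hA2 := A2 α hα1
  have hA1 := A1 α hα1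
  have hrhs : π 0 * h (α + 1) / π (α + 1) ≤ π 0 * (h α / π α) := by
    have e : π 0 * h (α + 1) / π (α + 1) = π 0 * (h (α + 1) / π (α + 1)) := by ring
    rw [e]
    exact mul_le_mul_of_nonneg_left hA1 (hπ 0).le
  have hfin : (h α / π α) * (∑ k ∈ Finset.Icc 1 α,
      π k * (π (α - k) / π α - π (α - k + 1) / π (α + 1))) ≤ (h α / π α) * π 0 := by
    calc (h α / π α) * _ ≤ _ := hsum
      _ ≤ π 0 * h (α + 1) / π (α + 1) := hA2
      _ ≤ π 0 * (h α / π α) := hrhs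
      _ = (h α / π α) * π 0 := by ring
  exact le_of_mul_le_mul_left hfin hratio



/-- attractiveness criterion for the generic mass-migration
zero-range process with rates `g^k_α = (π(α-k)/π(α))·h(k)`, in the case where
`r(n) = π(n)/π(n+1)` is nonincreasing. -/
theorem stmt15
    (π h : ℕ → ℝ) (hπ : ∀ n : ℕ, 0 < π n)
    (hhnn : ∀ n : ℕ, 0 ≤ h n) (hh0 : h 0 = 0)
    (hr : ∀ n : ℕ, 1 ≤ n → π (n + 1) / π (n + 2) ≤ π n / π (n + 1)) :
    ((∀ α m : ℕ, 1 ≤ α → 1 ≤ m → m ≤ α →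
        (0 ≤ ∑ j ∈ Finset.range m,
              π j * (h (α - j) / π α - h (α + 1 - j) / π (α + 1)) ∧
          ∑ j ∈ Finset.range m,
              π j * (h (α - j) / π α - h (α + 1 - j) / π (α + 1))
            ≤ π m * h (α + 1 - m) / π (α + 1)))
      ↔ ((∀ α : ℕ, 1 ≤ α → h (α + 1) / π (α + 1) ≤ h α / π α)
        ∧ (∀ α : ℕ, 1 ≤ α →
            ∑ k ∈ Finset.Icc 1 α,
                h k * (π (α - k) / π α - π (α - k + 1) / π (α + 1))
              ≤ π 0 * h (α + 1) / π (α + 1)))) ∧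
    ((∀ α : ℕ, 1 ≤ α → 0 < h α) →
      ((∀ α : ℕ, 1 ≤ α → h (α + 1) / π (α + 1) ≤ h α / π α)
        ∧ (∀ α : ℕ, 1 ≤ α →
            ∑ k ∈ Finset.Icc 1 α,
                h k * (π (α - k) / π α - π (α - k + 1) / π (α + 1))
              ≤ π 0 * h (α + 1) / π (α + 1))) →
      (∀ α : ℕ, 2 ≤ α →
        (1 / π α) * ∑ i ∈ Finset.Icc 1 (α - 1), π i * π (α - i)
          ≤ (1 / π (α + 1)) * ∑ i ∈ Finset.Icc 1 α, π i * π (α + 1 - i))) ∧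
    (∀ h₀ : ℝ, 0 < h₀ → (∀ α : ℕ, 1 ≤ α → h α = h₀ * π α) →
      ((∀ α m : ℕ, 1 ≤ α → 1 ≤ m → m ≤ α →
          (0 ≤ ∑ j ∈ Finset.range m,
                π j * (h (α - j) / π α - h (α + 1 - j) / π (α + 1)) ∧
            ∑ j ∈ Finset.range m,
                π j * (h (α - j) / π α - h (α + 1 - j) / π (α + 1))
              ≤ π m * h (α + 1 - m) / π (α + 1)))
        ↔ (∀ α : ℕ, 2 ≤ α →
            (1 / π α) * ∑ i ∈ Finset.Icc 1 (α - 1), π i * π (α - i)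
              ≤ (1 / π (α + 1)) * ∑ i ∈ Finset.Icc 1 α, π i * π (α + 1 - i)))) := by
  refine ⟨iff1 π h hπ hhnn hr, ?_, ?_⟩
  · intro hpos hA
    exact lem2 π h hπ hr hpos hA.1 hA.2
  · intro h₀ hh₀ hprop
    constructor
    · intro AG
      obtain ⟨A1, A2⟩ := (iff1 π h hπ hhnn hr).mp AG
      exact lem2 π h hπ hr (fun β hβ => by rw [hprop β hβ]; exact mul_pos hh₀ (hπ β)) A1 A2
    · intro A3
      apply (iff1 π h hπ hhnn hr).mpr
      constructor
      · intro α hα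
        rw [hprop α hα, hprop (α + 1) (by omega)]
        rw [mul_div_assoc, mul_div_assoc, div_self (hπ α).ne', div_self (hπ (α + 1)).ne']
      · intro α hα
        have hC : ∑ k ∈ Finset.Icc 1 α, π k * (π (α - k) / π α - π (α - k + 1) / π (α + 1))
            ≤ π 0 := by
          rcases eq_or_lt_of_le hα with h1 | h2
          · subst h1
            rw [Finset.Icc_self, Finset.sum_singleton]
            have e : π 1 * (π 0 / π 1) = π 0 := by
              rw [mul_div_assoc']; exact mul_div_cancel_left₀ _ (hπ 1).ne'
            have e2 : (0:ℝ) ≤ π 1 * (π 1 / π 2) :=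
              mul_nonneg (hπ 1).le (div_nonneg (hπ 1).le (hπ 2).le)
            nlinarith [e, e2]
          · exact (C_iff_A3 π hπ h2).mpr (A3 α h2)
        have hs : ∑ k ∈ Finset.Icc 1 α, h k * (π (α - k) / π α - π (α - k + 1) / π (α + 1))
            = h₀ * ∑ k ∈ Finset.Icc 1 α,
                π k * (π (α - k) / π α - π (α - k + 1) / π (α + 1)) := by
          rw [Finset.mul_sum]
          refine Finset.sum_congr rfl fun k hk => ?_
          obtain ⟨hk1, _⟩ := Finset.mem_Icc.mp hk
          rw [hprop k hk1]; ring
        have hr2 : π 0 * h (α + 1) / π (α + 1) = h₀ * π 0 := by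
          rw [hprop (α + 1) (by omega)]
          have hne : π (α + 1) ≠ 0 := (hπ _).ne'
          field_simp
        rw [hs, hr2]
        exact mul_le_mul_of_nonneg_left hC hh₀.le
end

section
/- Let μ : ℕ → (0,∞) be such that the sequence n ↦ μ(n)/μ(n+1) is nondecreasing. Let φ_c := sup{φ ≥ 0 : Σ_{n≥0} μ(n)·φⁿ < ∞} be the radius of convergence of the power series Σ_{n≥0} μ(n)·φⁿ, and assume φ_c < ∞. Then the series Σ_{n≥0} μ(n)·φ_cⁿ diverges (equals +∞). -/
open Filter

/-- (the single-site partition function of an attractive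
zero-range / misanthropes process diverges at its radius of convergence:
if `μ(n)/μ(n+1)` is nondecreasing and the radius of convergence `φ_c` of
`Σ_n μ(n) φ^n` is finite, then the series diverges at `φ_c`). -/
theorem stmt17
    (μ : ℕ → ℝ) (hμ : ∀ n : ℕ, 0 < μ n)
    (hmono : Monotone (fun n : ℕ => μ n / μ (n + 1)))
    (φc : ℝ)
    (hbdd : BddAbove {φ : ℝ | 0 ≤ φ ∧ Summable (fun n : ℕ => μ n * φ ^ n)})
    (hφc : φc = sSup {φ : ℝ | 0 ≤ φ ∧ Summable (fun n : ℕ => μ n * φ ^ n)}) :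
    ¬ Summable (fun n : ℕ => μ n * φc ^ n) := by
  intro hS
  set S := {φ : ℝ | 0 ≤ φ ∧ Summable (fun n : ℕ => μ n * φ ^ n)} with hs
  -- key: a ratio-test style criterion for membership in S
  have key : ∀ φ r : ℝ, 0 ≤ φ → r < 1 →
      (∃ N : ℕ, ∀ n ≥ N, φ * μ (n + 1) ≤ r * μ n) → φ ∈ S := by
    intro φ r hφ hr ⟨N, h⟩
    refine ⟨hφ, ?_⟩
    apply summable_of_ratio_norm_eventually_le hr
    filter_upwards [eventually_ge_atTop N] with n hn
    have h1 : 0 ≤ μ (n + 1) * φ ^ (n + 1) :=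
      mul_nonneg (hμ (n + 1)).le (pow_nonneg hφ _)
    have h2 : 0 ≤ μ n * φ ^ n := mul_nonneg (hμ n).le (pow_nonneg hφ _)
    rw [Real.norm_eq_abs, Real.norm_eq_abs, abs_of_nonneg h1, abs_of_nonneg h2]
    have := mul_le_mul_of_nonneg_right (h n hn) (pow_nonneg hφ n)
    calc μ (n + 1) * φ ^ (n + 1) = (φ * μ (n + 1)) * φ ^ n := by ring
      _ ≤ (r * μ n) * φ ^ n := this
      _ = r * (μ n * φ ^ n) := by ring
  -- Step 1: φc > 0
  have hc0 : 0 < μ 0 / μ 1 := div_pos (hμ 0) (hμ 1)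
  have hφ0 : (μ 0 / (2 * μ 1)) ∈ S := by
    apply key _ (1/2) (div_nonneg (hμ 0).le (by linarith [hμ 1])) (by norm_num)
    refine ⟨0, fun n _ => ?_⟩
    have h := hmono (Nat.zero_le n)
    simp only at h
    have h' : μ 0 * μ (n + 1) ≤ μ n * μ 1 := by
      rw [div_le_div_iff₀ (hμ 1) (hμ (n + 1))] at h
      linarith
    have hμ1 : 0 < μ 1 := hμ 1
    rw [div_mul_eq_mul_div, div_le_iff₀ (by positivity)]
    nlinarith [hμ (n + 1)]
  have hφcpos : 0 < φc := by
    have := le_csSup hbdd hφ0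
    rw [← hφc] at this
    have : 0 < μ 0 / (2 * μ 1) := div_pos (hμ 0) (by linarith [hμ 1])
    linarith [le_csSup hbdd hφ0, hφc ▸ le_csSup hbdd hφ0]
  -- Step 2: find N with decreasing term
  have hten : Tendsto (fun n => μ n * φc ^ n) atTop (nhds 0) := hS.tendsto_atTop_zero
  have hN : ∃ N : ℕ, μ (N + 1) * φc ^ (N + 1) < μ N * φc ^ N := by
    by_contra h
    push_neg at h
    have hmonoa : Monotone (fun n => μ n * φc ^ n) := monotone_nat_of_le_succ h
    have hge : (0 : ℝ) ≥ μ 0 * φc ^ 0 := by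
      apply ge_of_tendsto hten
      filter_upwards with n using hmonoa (Nat.zero_le n)
    have : 0 < μ 0 * φc ^ 0 := mul_pos (hμ 0) (pow_pos hφcpos 0)
    linarith
  obtain ⟨N, hNlt⟩ := hN
  set q : ℝ := (μ (N + 1) * φc) / μ N with hq
  have hqpos : 0 < q := div_pos (mul_pos (hμ (N+1)) hφcpos) (hμ N)
  have hq1 : q < 1 := by
    rw [hq, div_lt_one (hμ N)]
    have hp : 0 < φc ^ N := pow_pos hφcpos N
    have : μ (N + 1) * φc ^ (N + 1) = (μ (N + 1) * φc) * φc ^ N := by ring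
    nlinarith
  -- For n ≥ N : φc * μ (n+1) ≤ q * μ n
  have hratio : ∀ n ≥ N, φc * μ (n + 1) ≤ q * μ n := by
    intro n hn
    have h := hmono hn
    simp only at h
    rw [div_le_div_iff₀ (hμ (N + 1)) (hμ (n + 1))] at h
    rw [hq, div_mul_eq_mul_div, le_div_iff₀ (hμ N)]
    nlinarith
  -- Step 3: a slightly larger φ' still in S
  set φ' : ℝ := φc * ((1 + 1/q) / 2) with hφ'
  have hs1 : 1 < (1 + 1/q) / 2 := by
    have : 1 < 1/q := by rw [lt_div_iff₀ hqpos]; linarith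
    linarith
  have hφ'gt : φc < φ' := by
    rw [hφ']
    nlinarith
  have hφ'S : φ' ∈ S := by
    apply key _ ((q + 1) / 2) (by positivity) (by linarith)
    refine ⟨N, fun n hn => ?_⟩
    have h := hratio n hn
    have : φ' * μ (n + 1) = (φc * μ (n + 1)) * ((1 + 1/q) / 2) := by rw [hφ']; ring
    rw [this]
    have h2 : (φc * μ (n + 1)) * ((1 + 1/q) / 2) ≤ (q * μ n) * ((1 + 1/q) / 2) := by
      apply mul_le_mul_of_nonneg_right h (by positivity)
    have h3 : (q * μ n) * ((1 + 1/q) / 2) = ((q + 1) / 2) * μ n := by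
      field_simp
    linarith [h2, h3.le]
  have := le_csSup hbdd hφ'S
  rw [← hφc] at this
  linarith
end

section
/- For every real b ≥ 1 there exists a constant C > 0 such that for every integer α ≥ 2, Σ_{k=1}^{α−1} α^{b−1} / (k^{b−1}·(α−k)^{b+1}) ≤ C. -/
lemma sum_sq_le (n : ℕ) : ∑ j ∈ Finset.Icc 1 n, (1:ℝ) / (j:ℝ)^2 ≤ 2 := by
  have key : ∀ m : ℕ, ∑ j ∈ Finset.Icc 1 (m+1), (1:ℝ)/(j:ℝ)^2 ≤ 2 - 1/((m:ℝ)+1) := by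
    intro m
    induction m with
    | zero => norm_num
    | succ p ih =>
      rw [Finset.sum_Icc_succ_top (by omega)]
      push_cast
      have h1 : (0:ℝ) < (p:ℝ)+1 := by positivity
      have h2 : (0:ℝ) < (p:ℝ)+1+1 := by positivity
      have h3 : (1:ℝ)/((p:ℝ)+1+1)^2 ≤ 1/((p:ℝ)+1) - 1/((p:ℝ)+1+1) := by
        rw [div_sub_div _ _ (ne_of_gt h1) (ne_of_gt h2), div_le_div_iff₀ (by positivity) (by positivity)]
        nlinarith
      linarith
  cases n with
  | zero => simp
  | succ m =>
    have := key m
    have h1 : (0:ℝ) < (m:ℝ)+1 := by positivity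
    have : (0:ℝ) ≤ 1/((m:ℝ)+1) := by positivity
    linarith [key m]

/-- uniform bound verifying the existence condition for the
mass-migration zero-range process with `π(n)/π(n+1) = 1 + b/n`,
`h(k) = π(k)/k`; the powers are real powers. -/
theorem stmt18 (b : ℝ) (hb : 1 ≤ b) :
    ∃ C : ℝ, 0 < C ∧ ∀ α : ℕ, 2 ≤ α →
      ∑ k ∈ Finset.Icc 1 (α - 1),
          (α : ℝ) ^ (b - 1) / ((k : ℝ) ^ (b - 1) * ((α - k : ℕ) : ℝ) ^ (b + 1))
        ≤ C := by
  refine ⟨(2:ℝ) ^ (b-1) * 2, by positivity, ?_⟩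
  intro α hα
  have hb1 : (0:ℝ) ≤ b - 1 := by linarith
  have step1 : ∀ k ∈ Finset.Icc 1 (α - 1),
      (α : ℝ) ^ (b - 1) / ((k : ℝ) ^ (b - 1) * ((α - k : ℕ) : ℝ) ^ (b + 1))
        ≤ (2:ℝ) ^ (b-1) * (1 / ((α - k : ℕ) : ℝ)^2) := by
    intro k hk
    simp only [Finset.mem_Icc] at hk
    obtain ⟨hk1, hk2⟩ := hk
    set K : ℝ := (k : ℝ) with hKdef
    set M : ℝ := ((α - k : ℕ) : ℝ) with hMdef
    have hK : 1 ≤ K := by rw [hKdef]; exact_mod_cast hk1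
    have hM : 1 ≤ M := by
      have h : 1 ≤ α - k := by omega
      rw [hMdef]; exact_mod_cast h
    have hKM : K + M = (α : ℝ) := by
      rw [hKdef, hMdef]
      have : k + (α - k) = α := by omega
      exact_mod_cast congrArg (Nat.cast : ℕ → ℝ) this
    have hA : (α : ℝ) ≤ 2 * K * M := by
      rw [← hKM]; nlinarith
    have hApos : (0:ℝ) ≤ (α : ℝ) := by positivity
    have hKpos : (0:ℝ) < K := by linarith
    have hMpos : (0:ℝ) < M := by linarith
    have hnum : (α : ℝ) ^ (b - 1) ≤ (2:ℝ)^(b-1) * K^(b-1) * M^(b-1) := by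
      have h := Real.rpow_le_rpow hApos hA hb1
      rwa [Real.mul_rpow (by positivity) (le_of_lt hMpos),
        Real.mul_rpow (by norm_num) (le_of_lt hKpos)] at h
    have hden : K ^ (b - 1) * M ^ (b + 1) = K^(b-1) * M^(b-1) * M^2 := by
      rw [show b + 1 = (b-1) + 2 by ring, Real.rpow_add hMpos, Real.rpow_two, mul_assoc]
    rw [hden]
    have hdenpos : (0:ℝ) < K^(b-1) * M^(b-1) * M^2 := by positivity
    rw [div_le_iff₀ hdenpos]
    calc (α : ℝ) ^ (b - 1) ≤ (2:ℝ)^(b-1) * K^(b-1) * M^(b-1) := hnum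
      _ = (2:ℝ)^(b-1) * (1 / M^2) * (K^(b-1) * M^(b-1) * M^2) := by
          field_simp
  calc ∑ k ∈ Finset.Icc 1 (α - 1),
          (α : ℝ) ^ (b - 1) / ((k : ℝ) ^ (b - 1) * ((α - k : ℕ) : ℝ) ^ (b + 1))
      ≤ ∑ k ∈ Finset.Icc 1 (α - 1), (2:ℝ)^(b-1) * (1 / ((α - k : ℕ) : ℝ)^2) :=
        Finset.sum_le_sum step1
    _ = (2:ℝ)^(b-1) * ∑ k ∈ Finset.Icc 1 (α - 1), (1 / ((α - k : ℕ) : ℝ)^2) := by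
        rw [Finset.mul_sum]
    _ = (2:ℝ)^(b-1) * ∑ j ∈ Finset.Icc 1 (α - 1), ((1:ℝ) / (j : ℝ)^2) := by
        congr 1
        apply Finset.sum_nbij' (fun k => α - k) (fun j => α - j)
        · intro a ha; simp only [Finset.mem_Icc] at ha ⊢; omega
        · intro a ha; simp only [Finset.mem_Icc] at ha ⊢; omega
        · intro a ha; simp only [Finset.mem_Icc] at ha; omega
        · intro a ha; simp only [Finset.mem_Icc] at ha; omega
        · intro a ha; rfl
    _ ≤ (2:ℝ)^(b-1) * 2 := by
        have := sum_sq_le (α - 1)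
        have h2 : (0:ℝ) ≤ (2:ℝ)^(b-1) := by positivity
        nlinarith
end
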